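/- arXiv:2503.19533 — 9 statements merged into one kernel-verified Lean document; each statement's English description precedes it below -/
import Mathlib

section
/- Let k be an algebraically closed field of characteristic p > 0 and let P ∈ k[X] be a polynomial. The differential form ω = dX/P(X) is logarithmic (i.e., ω = dF/F for some rational function F ∈ k(X)) if and only if the (p-1)-th derivative of the polynomial P^(p-1) is equal to -1. -/
/-!
Over an algebraically closed field both conditions say that `P = c ∏_{t ∈ S} (X - t)` has
simple roots, at least one, and that every residue `1 / P'(t)` of `dX / P` lies in `𝔽_p`.

For logarithmic forms this is partial fractions: `dF/F = ∑ ord_t(F) dX / (X - t)`, so a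
logarithmic `dX / P` equals `∑ r_t dX / (X - t)` with `r_t ∈ 𝔽_p`. Clearing denominators,
`P · ∑ r_t L_t = ∏ (X - t)` with `L_t = ∏_{s ≠ t} (X - s)`. The second factor takes the value
`r_t L_t(t) ≠ 0` at each pole `t`, so it has no roots and is constant; this gives the shape of `P`
and `r_t = 1 / P'(t)`.

For the derivative, expand `1 = ∑ ℓ_t` in the Lagrange basis `ℓ_t = w_t L_t` at the roots. Then
`P^(p-1) = ∑ c^(p-1) w_t (X - t)^(p-1) L_t^p`; as `D^(p-1)` is `k[X^p]`-linear and sends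
`(X - t)^(p-1)` to `(p-1)! = -1` (Wilson), `D^(p-1) (P^(p-1)) = -∑ P'(t)^(p-1) ℓ_t^p`. Since
`∑ ℓ_t^p = (∑ ℓ_t)^p = 1` and `ℓ_t(s) = δ_ts`, this is `-1` iff every `P'(t)^(p-1) = 1`, that is
`1 / P'(t) ∈ 𝔽_p`. A double root of `P` would divide `D^(p-1) (P^(p-1))`, so it cannot be `-1`.
-/

open Polynomial

/-- A meromorphic differential form `ω = f dX` on `ℙ¹_k` is *logarithmic* if `ω = dF/F`
for some `F ∈ k(X)`.  Writing `F = F₁/G₁` with `F₁, G₁ ∈ k[X]` nonzero, this means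
`f = F₁'/F₁ - G₁'/G₁`. -/
def IsLogarithmic {k : Type*} [Field k] (f : RatFunc k) : Prop :=
  ∃ F G : Polynomial k, F ≠ 0 ∧ G ≠ 0 ∧
    f = algebraMap (Polynomial k) (RatFunc k) (derivative F) /
          algebraMap (Polynomial k) (RatFunc k) F
        - algebraMap (Polynomial k) (RatFunc k) (derivative G) /
          algebraMap (Polynomial k) (RatFunc k) G

open Lagrange Finset

section IterateDerivative

variable {R : Type*} [CommRing R]

theorem pow_dvd_iterate_derivative_pow_of_sq_dvd {P q : R[X]} (n : ℕ) (h : q ^ 2 ∣ P) :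
    q ^ n ∣ derivative^[n] (P ^ n) := by
  have h2n : q ^ (2 * n) ∣ P ^ n := by rw [pow_mul]; exact pow_dvd_pow_of_dvd h n
  simpa [two_mul] using pow_sub_dvd_iterate_derivative_of_pow_dvd n h2n

variable (p : ℕ) [CharP R p]

theorem iterate_derivative_mul_pow_char (n : ℕ) (f g : R[X]) :
    derivative^[n] (f * g ^ p) = derivative^[n] f * g ^ p := by
  induction n generalizing f with
  | zero => rfl
  | succ n ih =>
    rw [Function.iterate_succ_apply, derivative_mul, derivative_pow, CharP.cast_eq_zero,
      C_0, zero_mul, zero_mul, mul_zero, add_zero, ih, Function.iterate_succ_apply]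

theorem iterate_derivative_X_sub_C_pow_pred [Fact p.Prime] (t : R) :
    derivative^[p - 1] ((X - C t) ^ (p - 1)) = -1 := by
  rw [iterate_derivative_X_sub_pow_self, ← map_natCast (ZMod.castHom dvd_rfl R[X]),
    ZMod.wilsons_lemma, map_neg, map_one]

end IterateDerivative

theorem inv_mem_bot_iff_pow_pred_eq_one {k : Type*} [Field k] (p : ℕ) [Fact p.Prime]
    [CharP k p] {x : k} (hx : x ≠ 0) : x⁻¹ ∈ (⊥ : Subfield k) ↔ x ^ (p - 1) = 1 := by
  rw [inv_mem_iff, Subfield.mem_bot_iff_pow_eq_self k p,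
    ← pow_sub_one_mul (Fact.out : p.Prime).ne_zero, mul_eq_right₀ hx]

section AlgClosed

variable {k : Type*} [Field k] [IsAlgClosed k]

theorem exists_eq_C_of_forall_eval_ne_zero {N : k[X]} (h : ∀ a, eval a N ≠ 0) :
    ∃ d, N = C d :=
  ⟨N.coeff 0, eq_C_of_degree_eq_zero (not_not.mp fun hdeg =>
    (IsAlgClosed.exists_root N hdeg).elim h)⟩

theorem exists_eq_C_mul_nodal_of_forall_not_sq_dvd {P : k[X]} (hP : P ≠ 0)
    (h : ∀ a, ¬(X - C a) ^ 2 ∣ P) : ∃ c ≠ 0, ∃ S : Finset k, P = C c * nodal S id := by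
  classical
  have hnodup : P.roots.Nodup := by
    refine Multiset.nodup_iff_count_le_one.mpr fun a => ?_
    rw [count_roots]
    by_contra! h2
    exact h a ((le_rootMultiplicity_iff hP).mp h2)
  refine ⟨P.leadingCoeff, leadingCoeff_ne_zero.mpr hP, P.roots.toFinset, ?_⟩
  rw [nodal_eq, prod_eq_multiset_prod, Multiset.toFinset_val, hnodup.dedup]
  exact (IsAlgClosed.splits P).eq_prod_roots

end AlgClosed

section Lagrange

variable {k : Type*} [Field k] [DecidableEq k] {S : Finset k} {t : k}

theorem basis_id_eq_C_mul_nodal_erase (ht : t ∈ S) :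
    Lagrange.basis S id t = C (nodalWeight S id t) * nodal (S.erase t) id := by
  rw [basis_eq_prod_sub_inv_mul_nodal_div ht, ← nodal_erase_eq_nodal_div ht]

theorem eval_derivative_C_mul_nodal (ht : t ∈ S) (c : k) :
    eval t (derivative (C c * nodal S id)) = c * (nodalWeight S id t)⁻¹ := by
  rw [derivative_C_mul, eval_mul, eval_C, nodalWeight_eq_eval_derivative_nodal (v := id) ht,
    inv_inv, id]

theorem eval_sum_C_mul_nodal_erase (ht : t ∈ S) (z : k → k) :
    eval t (∑ s ∈ S, C (z s) * nodal (S.erase s) id) = z t * (nodalWeight S id t)⁻¹ := by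
  rw [eval_finsetSum, sum_eq_single_of_mem t ht, eval_mul, eval_C,
    nodalWeight_eq_eval_nodal_erase_inv (v := id), inv_inv, id]
  intro s _ hst
  rw [eval_mul, show eval t (nodal (S.erase s) id) = 0 from
    eval_nodal_at_node (v := id) (mem_erase.mpr ⟨hst.symm, ht⟩), mul_zero]

theorem nodal_pow_eq_sum (hS : S.Nonempty) (n : ℕ) :
    nodal S id ^ n =
      ∑ t ∈ S, C (nodalWeight S id t) * ((X - C t) ^ n * nodal (S.erase t) id ^ (n + 1)) := by
  conv_lhs => rw [← mul_one (nodal S id ^ n), ← sum_basis (s := S) (Set.injOn_id _) hS, mul_sum]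
  refine sum_congr rfl fun t ht => ?_
  rw [basis_id_eq_C_mul_nodal_erase ht, nodal_eq_mul_nodal_erase ht, id, mul_pow]
  ring

variable (p : ℕ) [Fact p.Prime] [CharP k p]

theorem iterate_derivative_C_mul_nodal_pow_pred (hS : S.Nonempty) (c : k) :
    derivative^[p - 1] ((C c * nodal S id) ^ (p - 1)) =
      -∑ t ∈ S, C (eval t (derivative (C c * nodal S id)) ^ (p - 1)) *
        Lagrange.basis S id t ^ p := by
  have hp : p - 1 + 1 = p := Nat.sub_add_cancel (Fact.out : p.Prime).one_le
  rw [mul_pow, nodal_pow_eq_sum hS, hp, mul_sum, iterate_derivative_sum, ← sum_neg_distrib]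
  refine sum_congr rfl fun t ht => ?_
  rw [← mul_assoc, ← C_pow, ← C_mul, iterate_derivative_C_mul, iterate_derivative_mul_pow_char,
    iterate_derivative_X_sub_C_pow_pred, eval_derivative_C_mul_nodal ht,
    basis_id_eq_C_mul_nodal_erase ht]
  have hcoeff : C (c ^ (p - 1) * nodalWeight S id t) =
      C ((c * (nodalWeight S id t)⁻¹) ^ (p - 1)) * C (nodalWeight S id t) ^ p := by
    have hw := nodalWeight_ne_zero (v := id) (Set.injOn_id _) ht
    rw [← C_pow, ← C_mul, ← pow_sub_one_mul (Fact.out : p.Prime).ne_zero (nodalWeight S id t),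
      mul_pow, inv_pow]
    field_simp
  rw [hcoeff]
  ring

theorem sum_C_mul_basis_pow_eq_one_iff (hS : S.Nonempty) (a : k → k) :
    ∑ t ∈ S, C (a t) * Lagrange.basis S id t ^ p = 1 ↔ ∀ t ∈ S, a t = 1 := by
  constructor
  · intro h t ht
    have hself : eval t (Lagrange.basis S id t) = 1 :=
      eval_basis_self (v := id) (Set.injOn_id _) ht
    have := congrArg (eval t) h
    rwa [eval_finsetSum, sum_eq_single_of_mem t ht, eval_mul, eval_C, eval_pow, hself, one_pow,
      mul_one, eval_one] at this
    intro s _ hst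
    have hne : eval t (Lagrange.basis S id s) = 0 := eval_basis_of_ne (v := id) hst ht
    rw [eval_mul, eval_pow, hne, zero_pow (Fact.out : p.Prime).ne_zero, mul_zero]
  · intro h
    rw [sum_congr rfl fun t ht => by rw [h t ht, C_1, one_mul], ← sum_pow_char,
      sum_basis (Set.injOn_id _) hS, one_pow]

theorem iterate_derivative_C_mul_nodal_pow_pred_eq_neg_one_iff (hS : S.Nonempty) {c : k}
    (hc : c ≠ 0) :
    derivative^[p - 1] ((C c * nodal S id) ^ (p - 1)) = -1 ↔
      ∀ t ∈ S, (eval t (derivative (C c * nodal S id)))⁻¹ ∈ (⊥ : Subfield k) := by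
  rw [iterate_derivative_C_mul_nodal_pow_pred p hS, neg_inj, sum_C_mul_basis_pow_eq_one_iff p hS]
  refine forall₂_congr fun t ht => (inv_mem_bot_iff_pow_pred_eq_one p ?_).symm
  rw [eval_derivative_C_mul_nodal ht]
  exact mul_ne_zero hc (inv_ne_zero (nodalWeight_ne_zero (Set.injOn_id _) ht))

end Lagrange

section PartialFractions

variable {k : Type*} [Field k]

noncomputable def ratLogDeriv (F : k[X]) : RatFunc k :=
  algebraMap k[X] (RatFunc k) (derivative F) / algebraMap k[X] (RatFunc k) F

noncomputable def partialFractionSum (S : Finset k) (r : k → k) : RatFunc k :=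
  ∑ t ∈ S, algebraMap k[X] (RatFunc k) (C (r t)) / algebraMap k[X] (RatFunc k) (X - C t)

theorem ratLogDeriv_C (a : k) : ratLogDeriv (C a) = 0 := by
  rw [ratLogDeriv, derivative_C, map_zero, zero_div]

theorem ratLogDeriv_mul {F G : k[X]} (hF : F ≠ 0) (hG : G ≠ 0) :
    ratLogDeriv (F * G) = ratLogDeriv F + ratLogDeriv G := by
  have hF' := RatFunc.algebraMap_ne_zero hF
  have hG' := RatFunc.algebraMap_ne_zero hG
  simp only [ratLogDeriv, derivative_mul, map_add, map_mul]
  field_simp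

theorem ratLogDeriv_prod {ι : Type*} (s : Finset ι) (f : ι → k[X]) (hf : ∀ i ∈ s, f i ≠ 0) :
    ratLogDeriv (∏ i ∈ s, f i) = ∑ i ∈ s, ratLogDeriv (f i) := by
  classical
  induction s using Finset.induction with
  | empty => rw [prod_empty, sum_empty, ← C_1, ratLogDeriv_C]
  | insert a s ha ih =>
    rw [prod_insert ha, sum_insert ha, ratLogDeriv_mul (hf a (mem_insert_self a s))
      (prod_ne_zero_iff.mpr fun i hi => hf i (mem_insert_of_mem hi)),
      ih fun i hi => hf i (mem_insert_of_mem hi)]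

theorem ratLogDeriv_X_sub_C_pow (t : k) (n : ℕ) :
    ratLogDeriv ((X - C t) ^ n) =
      algebraMap k[X] (RatFunc k) (C (n : k)) / algebraMap k[X] (RatFunc k) (X - C t) := by
  induction n with
  | zero => rw [pow_zero, ← C_1, ratLogDeriv_C, Nat.cast_zero, C_0, map_zero, zero_div]
  | succ n ih =>
    rw [pow_succ, ratLogDeriv_mul (pow_ne_zero _ (X_sub_C_ne_zero t)) (X_sub_C_ne_zero t), ih,
      ratLogDeriv, derivative_X_sub_C, Nat.cast_succ, C_add, C_1, map_add, add_div, map_one]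

theorem ratLogDeriv_prod_X_sub_C_pow (S : Finset k) (m : k → ℕ) :
    ratLogDeriv (∏ t ∈ S, (X - C t) ^ m t) = partialFractionSum S fun t => (m t : k) := by
  rw [ratLogDeriv_prod _ _ fun t _ => pow_ne_zero _ (X_sub_C_ne_zero t)]
  exact sum_congr rfl fun t _ => ratLogDeriv_X_sub_C_pow t (m t)

theorem partialFractionSum_sub (S : Finset k) (r s : k → k) :
    partialFractionSum S r - partialFractionSum S s = partialFractionSum S (r - s) := by
  rw [partialFractionSum, partialFractionSum, partialFractionSum, ← sum_sub_distrib]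
  simp only [Pi.sub_apply, map_sub, sub_div]

theorem partialFractionSum_subset {S T : Finset k} (hST : S ⊆ T) {r : k → k}
    (hr : ∀ t ∈ T, t ∉ S → r t = 0) : partialFractionSum S r = partialFractionSum T r :=
  sum_subset hST fun t ht htS => by rw [hr t ht htS, C_0, map_zero, zero_div]

theorem ratLogDeriv_eq_partialFractionSum [IsAlgClosed k] [DecidableEq k] {F : k[X]}
    (hF : F ≠ 0) {T : Finset k} (hT : F.roots.toFinset ⊆ T) :
    ratLogDeriv F = partialFractionSum T fun t => (F.roots.count t : k) := by
  have hsplit : F = C F.leadingCoeff * ∏ t ∈ F.roots.toFinset, (X - C t) ^ F.roots.count t := by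
    rw [← prod_multiset_map_count]
    exact (IsAlgClosed.splits F).eq_prod_roots
  conv_lhs => rw [hsplit]
  rw [ratLogDeriv_mul (C_ne_zero.mpr (leadingCoeff_ne_zero.mpr hF))
      (prod_ne_zero_iff.mpr fun t _ => pow_ne_zero _ (X_sub_C_ne_zero t)), ratLogDeriv_C,
    zero_add, ratLogDeriv_prod_X_sub_C_pow]
  refine partialFractionSum_subset hT fun t _ ht => ?_
  rw [Multiset.count_eq_zero.mpr (mt Multiset.mem_toFinset.mpr ht), Nat.cast_zero]

variable [DecidableEq k] {S : Finset k}

theorem partialFractionSum_mul_nodal (r : k → k) :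
    partialFractionSum S r * algebraMap k[X] (RatFunc k) (nodal S id) =
      algebraMap k[X] (RatFunc k) (∑ t ∈ S, C (r t) * nodal (S.erase t) id) := by
  rw [partialFractionSum, sum_mul, map_sum]
  refine sum_congr rfl fun t ht => ?_
  rw [nodal_eq_mul_nodal_erase ht, id, map_mul, map_mul, ← mul_assoc,
    div_mul_cancel₀ _ (RatFunc.algebraMap_ne_zero (X_sub_C_ne_zero t))]

theorem one_div_C_mul_nodal (hS : S.Nonempty) {c : k} (hc : c ≠ 0) :
    1 / algebraMap k[X] (RatFunc k) (C c * nodal S id) =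
      partialFractionSum S fun t => (eval t (derivative (C c * nodal S id)))⁻¹ := by
  have hsum : ∑ t ∈ S, C (eval t (derivative (C c * nodal S id)))⁻¹ * nodal (S.erase t) id =
      C c⁻¹ := by
    rw [← mul_one (C c⁻¹), ← sum_basis (Set.injOn_id _) hS, mul_sum]
    refine sum_congr rfl fun t ht => ?_
    rw [eval_derivative_C_mul_nodal ht, basis_id_eq_C_mul_nodal_erase ht, mul_inv, inv_inv,
      C_mul, mul_assoc]
  have hP : C c * nodal S id ≠ 0 := mul_ne_zero (C_ne_zero.mpr hc) nodal_ne_zero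
  rw [div_eq_iff (RatFunc.algebraMap_ne_zero hP), map_mul (algebraMap k[X] (RatFunc k)),
    mul_left_comm, partialFractionSum_mul_nodal, hsum, ← map_mul, ← C_mul, mul_inv_cancel₀ hc,
    C_1, map_one]

theorem exists_eq_C_mul_nodal_of_one_div_eq_partialFractionSum [IsAlgClosed k] {P : k[X]}
    (hP : P ≠ 0) {z : k → k} (hz : ∀ t ∈ S, z t ≠ 0)
    (h : 1 / algebraMap k[X] (RatFunc k) P = partialFractionSum S z) :
    ∃ c ≠ 0, P = C c * nodal S id ∧ ∀ t ∈ S, (eval t (derivative P))⁻¹ = z t := by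
  set N := ∑ t ∈ S, C (z t) * nodal (S.erase t) id
  have hPN : P * N = nodal S id := by
    refine RatFunc.algebraMap_injective k ?_
    rw [map_mul, ← partialFractionSum_mul_nodal, ← h]
    field_simp [RatFunc.algebraMap_ne_zero hP]
  have hNt (t : k) (ht : t ∈ S) : eval t N = z t * (nodalWeight S id t)⁻¹ :=
    eval_sum_C_mul_nodal_erase ht z
  obtain ⟨d, hNd⟩ : ∃ d, N = C d := by
    refine exists_eq_C_of_forall_eval_ne_zero fun a ha => ?_
    by_cases haS : a ∈ S
    · rw [hNt a haS] at ha
      exact mul_ne_zero (hz a haS) (inv_ne_zero (nodalWeight_ne_zero (Set.injOn_id _) haS)) ha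
    · refine eval_nodal_not_at_node (v := id) (x := a) (fun j hj haj => haS (by rwa [haj])) ?_
      rw [← hPN, eval_mul, ha, mul_zero]
  have hd : d ≠ 0 := by
    rintro rfl
    rw [hNd, C_0, mul_zero] at hPN
    exact nodal_ne_zero hPN.symm
  have hPd : P = C d⁻¹ * nodal S id := by
    rw [← hPN, hNd, mul_left_comm, ← C_mul, inv_mul_cancel₀ hd, C_1, mul_one]
  refine ⟨d⁻¹, inv_ne_zero hd, hPd, fun t ht => ?_⟩
  have hw := nodalWeight_ne_zero (v := id) (Set.injOn_id _) ht
  have hdt := hNt t ht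
  rw [hNd, eval_C] at hdt
  rw [hPd, eval_derivative_C_mul_nodal ht, mul_inv, inv_inv, inv_inv, hdt,
    inv_mul_cancel_right₀ hw]

end PartialFractions

/-- The residues `1 / P'(t)` of `dX / P` at its poles, all simple, lie in the prime field. -/
def HasPrimeFieldResidues {k : Type*} [Field k] (P : k[X]) : Prop :=
  ∃ c ≠ 0, ∃ S : Finset k, S.Nonempty ∧ P = C c * nodal S id ∧
    ∀ t ∈ S, (eval t (derivative P))⁻¹ ∈ (⊥ : Subfield k)

section Criteria

variable {k : Type*} [Field k] [IsAlgClosed k]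

theorem hasPrimeFieldResidues_of_one_div_eq_partialFractionSum [DecidableEq k] {P : k[X]}
    (hP : P ≠ 0) {T : Finset k} {z : k → k} (hz : ∀ t, z t ∈ (⊥ : Subfield k))
    (h : 1 / algebraMap k[X] (RatFunc k) P = partialFractionSum T z) :
    HasPrimeFieldResidues P := by
  set S := T.filter (z · ≠ 0)
  have hS : 1 / algebraMap k[X] (RatFunc k) P = partialFractionSum S z :=
    h.trans (partialFractionSum_subset (filter_subset _ _) fun t ht htS =>
      not_not.mp fun hzt => htS (mem_filter.mpr ⟨ht, hzt⟩)).symm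
  have hSne : S.Nonempty := by
    rw [nonempty_iff_ne_empty]
    rintro hS0
    rw [hS0, partialFractionSum, sum_empty] at hS
    exact one_div_ne_zero (RatFunc.algebraMap_ne_zero hP) hS
  obtain ⟨c, hc, hPS, hres⟩ := exists_eq_C_mul_nodal_of_one_div_eq_partialFractionSum hP
    (fun t ht => (mem_filter.mp ht).2) hS
  exact ⟨c, hc, S, hSne, hPS, fun t ht => hres t ht ▸ hz t⟩

theorem isLogarithmic_one_div_iff (p : ℕ) [Fact p.Prime] [CharP k p] {P : k[X]} (hP : P ≠ 0) :
    IsLogarithmic (1 / algebraMap k[X] (RatFunc k) P) ↔ HasPrimeFieldResidues P := by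
  classical
  constructor
  · rintro ⟨F, G, hF, hG, hFG⟩
    change _ = ratLogDeriv F - ratLogDeriv G at hFG
    rw [ratLogDeriv_eq_partialFractionSum hF (T := F.roots.toFinset ∪ G.roots.toFinset)
      subset_union_left, ratLogDeriv_eq_partialFractionSum hG subset_union_right,
      partialFractionSum_sub] at hFG
    refine hasPrimeFieldResidues_of_one_div_eq_partialFractionSum hP (fun t => ?_) hFG
    exact (mem_bot_iff_intCast p k).mpr ⟨(F.roots.count t : ℤ) - G.roots.count t, by simp⟩
  · rintro ⟨c, hc, S, hS, rfl, hres⟩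
    choose! n hn using fun t ht => (mem_bot_iff_intCast p k).mp (hres t ht)
    have hprod (m : k → ℕ) : ∏ t ∈ S, (X - C t) ^ m t ≠ 0 :=
      prod_ne_zero_iff.mpr fun t _ => pow_ne_zero _ (X_sub_C_ne_zero t)
    refine ⟨_, _, hprod fun t => (n t).toNat, hprod fun t => (-n t).toNat, ?_⟩
    change _ = ratLogDeriv _ - ratLogDeriv _
    rw [ratLogDeriv_prod_X_sub_C_pow, ratLogDeriv_prod_X_sub_C_pow, partialFractionSum_sub,
      one_div_C_mul_nodal hS hc]
    refine sum_congr rfl fun t ht => ?_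
    have hnt : ((n t).toNat : k) - ((-n t).toNat : k) =
        (eval t (derivative (C c * nodal S id)))⁻¹ := by
      rw [← hn t ht]
      conv_rhs => rw [← Int.toNat_sub_toNat_neg (n t)]
      push_cast
      rfl
    simp only [Pi.sub_apply, hnt]

theorem iterate_derivative_pow_pred_eq_neg_one_iff (p : ℕ) [Fact p.Prime] [CharP k p]
    {P : k[X]} (hP : P ≠ 0) :
    derivative^[p - 1] (P ^ (p - 1)) = -1 ↔ HasPrimeFieldResidues P := by
  classical
  have hp : 0 < p - 1 := Nat.sub_pos_of_lt (Fact.out : p.Prime).one_lt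
  constructor
  · intro h
    have hsq (a : k) : ¬(X - C a) ^ 2 ∣ P := fun ha =>
      not_isUnit_X_sub_C a <| isUnit_of_dvd_unit ((dvd_pow_self _ hp.ne').trans
        (h ▸ pow_dvd_iterate_derivative_pow_of_sq_dvd (p - 1) ha)) isUnit_one.neg
    obtain ⟨c, hc, S, rfl⟩ := exists_eq_C_mul_nodal_of_forall_not_sq_dvd hP hsq
    rcases S.eq_empty_or_nonempty with rfl | hS
    · rw [nodal_empty, mul_one, ← C_pow, iterate_derivative_C hp] at h
      exact absurd (neg_eq_zero.mp h.symm) one_ne_zero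
    · exact ⟨c, hc, S, hS, rfl,
        (iterate_derivative_C_mul_nodal_pow_pred_eq_neg_one_iff p hS hc).mp h⟩
  · rintro ⟨c, hc, S, hS, rfl, hres⟩
    exact (iterate_derivative_C_mul_nodal_pow_pred_eq_neg_one_iff p hS hc).mpr hres

end Criteria

/-- The differential form `ω = dX / P(X)` is logarithmic if and only if the `(p-1)`-th
derivative of `P^(p-1)` equals `-1`. -/
theorem logarithmic_iff_derivative_pow_eq_neg_one
    {k : Type*} [Field k] [IsAlgClosed k] (p : ℕ) [Fact p.Prime] [CharP k p]
    (P : Polynomial k) (hP : P ≠ 0) :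
    IsLogarithmic (1 / algebraMap (Polynomial k) (RatFunc k) P) ↔
      derivative^[p - 1] (P ^ (p - 1)) = -1 :=
  (isLogarithmic_one_div_iff p hP).trans (iterate_derivative_pow_pred_eq_neg_one_iff p hP).symm
end

section
/- For an n-tuple a = (a_1, ..., a_n) of elements in a field k of characteristic p, the Moore determinant Δ_n(a) = det((a_j^{p^{i-1}})_{i,j}) is nonzero if and only if a_1, ..., a_n are linearly independent over the prime field F_p. -/
/-- The Moore matrix of an `n`-tuple `a` in a ring of characteristic `p`:
its `(i,j)` entry is `a j ^ p ^ i`. -/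
def mooreMatrix {k : Type*} [CommRing k] (p : ℕ) {n : ℕ} (a : Fin n → k) :
    Matrix (Fin n) (Fin n) k :=
  Matrix.of fun i j => a j ^ p ^ (i : ℕ)

/-- The Moore determinant `Δ_n(a)` is nonzero iff `a₁, …, a_n` are linearly independent
over the prime field `𝔽_p`. -/
theorem mooreDet_ne_zero_iff_linearIndependent
    {k : Type*} [Field k] (p : ℕ) [Fact p.Prime] [CharP k p] [Algebra (ZMod p) k]
    {n : ℕ} (a : Fin n → k) :
    (mooreMatrix p a).det ≠ 0 ↔ LinearIndependent (ZMod p) a := by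
  classical
  have hp : p.Prime := Fact.out
  have hmap : ∀ (c : ZMod p) (m : ℕ),
      (algebraMap (ZMod p) k c) ^ p ^ m = algebraMap (ZMod p) k c := by
    intro c m
    rw [← map_pow, ZMod.pow_card_pow]
  constructor
  · -- det ≠ 0 → linear independence
    intro hdet
    rw [Fintype.linearIndependent_iff]
    intro g hg
    by_contra hne
    push_neg at hne
    obtain ⟨i₀, hi₀⟩ := hne
    apply hdet
    rw [← Matrix.exists_mulVec_eq_zero_iff]
    refine ⟨fun j => algebraMap (ZMod p) k (g j), ?_, ?_⟩
    · intro h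
      apply hi₀
      have := congrFun h i₀
      simpa using (RingHom.injective (algebraMap (ZMod p) k))
        (by simpa using this)
    · funext i
      have key : ∀ j, a j ^ p ^ (i : ℕ) * algebraMap (ZMod p) k (g j)
          = (algebraMap (ZMod p) k (g j) * a j) ^ p ^ (i : ℕ) := by
        intro j
        rw [mul_pow, hmap, mul_comm]
      simp only [Matrix.mulVec, dotProduct, mooreMatrix, Matrix.of_apply,
        Pi.zero_apply]
      rw [Finset.sum_congr rfl (fun j _ => key j)]
      have hsum : (∑ j, algebraMap (ZMod p) k (g j) * a j) = 0 := by
        rw [← hg]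
        exact Finset.sum_congr rfl fun j _ => (Algebra.smul_def (g j) (a j)).symm
      simp_rw [← iterateFrobenius_def, ← map_sum, hsum, map_zero]
  · -- linear independence → det ≠ 0
    intro hli hdet
    obtain ⟨w, hw, hwM⟩ := Matrix.exists_vecMul_eq_zero_iff.mpr hdet
    obtain ⟨i₀, hi₀⟩ := Function.ne_iff.mp hw
    simp only [Pi.zero_apply] at hi₀
    -- the additive polynomial map
    set G : k →ₗ[ZMod p] k :=
      { toFun := fun x => ∑ i : Fin n, w i * x ^ p ^ (i : ℕ)
        map_add' := by
          intro x y
          rw [← Finset.sum_add_distrib]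
          refine Finset.sum_congr rfl fun i _ => ?_
          rw [add_pow_char_pow, mul_add]
        map_smul' := by
          intro c x
          simp only [RingHom.id_apply]
          rw [Finset.smul_sum]
          refine Finset.sum_congr rfl fun i _ => ?_
          rw [Algebra.smul_def, Algebra.smul_def, mul_pow, hmap]
          ring } with hG
    have hker : ∀ j, G (a j) = 0 := by
      intro j
      have := congrFun hwM j
      simpa [hG, Matrix.vecMul, dotProduct, mooreMatrix] using this
    have hspan : Submodule.span (ZMod p) (Set.range a) ≤ LinearMap.ker G := by
      rw [Submodule.span_le]
      rintro x ⟨j, rfl⟩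
      exact hker j
    -- the polynomial
    set f : Polynomial k := ∑ i : Fin n, Polynomial.C (w i) * Polynomial.X ^ p ^ (i : ℕ)
      with hf
    have hcoeff : f.coeff (p ^ (i₀ : ℕ)) = w i₀ := by
      rw [hf, Polynomial.finset_sum_coeff]
      rw [Finset.sum_eq_single i₀]
      · simp
      · intro j _ hj
        have : p ^ (i₀ : ℕ) ≠ p ^ (j : ℕ) := by
          intro h
          exact hj (Fin.val_injective (Nat.pow_right_injective hp.two_le h.symm))
        simp [Polynomial.coeff_X_pow, this]
      · simp
    have hfne : f ≠ 0 := fun h => by simp [h] at hcoeff; exact hi₀ hcoeff.symm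
    -- the span is finite with p ^ n elements
    set S := Submodule.span (ZMod p) (Set.range a) with hS
    haveI : Module.Finite (ZMod p) S :=
      Module.Finite.span_of_finite _ (Set.finite_range a)
    haveI : Finite S := Module.finite_of_finite (ZMod p)
    haveI : Fintype S := Fintype.ofFinite S
    have hcard : Fintype.card S = p ^ n := by
      rw [Module.card_eq_pow_finrank (K := ZMod p), ZMod.card,
        finrank_span_eq_card hli, Fintype.card_fin]
    have hn : 0 < n := i₀.pos
    have hdeg : f.natDegree < p ^ n := by
      have : f.natDegree ≤ p ^ (n - 1) := by
        apply Polynomial.natDegree_sum_le_of_forall_le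
        intro i _
        refine le_trans (Polynomial.natDegree_C_mul_le _ _) ?_
        refine le_trans (Polynomial.natDegree_X_pow_le _) ?_
        exact Nat.pow_le_pow_right hp.pos (Nat.le_sub_one_of_lt i.isLt)
      exact lt_of_le_of_lt this (Nat.pow_lt_pow_right hp.one_lt (Nat.sub_lt hn one_pos))
    have heval : ∀ x : S, f.eval (x : k) = 0 := by
      intro x
      have hx : G (x : k) = 0 := hspan x.2
      rw [hf]
      simpa [Polynomial.eval_finset_sum, hG] using hx
    have := Polynomial.eq_zero_of_natDegree_lt_card_of_eval_eq_zero f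
      Subtype.val_injective heval (by rw [hcard]; exact hdeg)
    exact hfne this
end

section
/- Let k be a field of characteristic p and (a_1,...,a_n) ∈ k^n. Then the Moore determinant satisfies the product formula Δ_n(a) = ∏_{i=1}^n ∏_{(ε_1,...,ε_{i-1}) ∈ F_p^{i-1}} (a_i + ε_{i-1}a_{i-1} + ... + ε_1 a_1). -/
open Polynomial Finset Matrix

theorem RingHom.mapMatrix_mooreMatrix {k k' : Type*} [CommRing k] [CommRing k'] (f : k →+* k')
    (p : ℕ) {n : ℕ} (a : Fin n → k) : f.mapMatrix (mooreMatrix p a) = mooreMatrix p (f ∘ a) := by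
  ext i j
  simp [mooreMatrix]

theorem Polynomial.eq_C_mul_prod_X_sub_C_of_natDegree_le {R ι : Type*} [CommRing R] [IsDomain R]
    [Fintype ι] {P : R[X]} {f : ι → R} (hf : Function.Injective f)
    (hroots : ∀ i, P.eval (f i) = 0) (hdeg : P.natDegree ≤ Fintype.card ι) :
    P = C (P.coeff (Fintype.card ι)) * ∏ i, (X - C (f i)) := by
  set N := Fintype.card ι
  set Q := C (P.coeff N) * ∏ i, (X - C (f i)) with hQ
  have hprod : (∏ i, (X - C (f i))).natDegree = N := by
    rw [natDegree_finsetProd_X_sub_C_eq_card, card_univ]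
  have hQdeg : Q.natDegree ≤ N := (natDegree_C_mul_le _ _).trans hprod.le
  have hQcoeff : Q.coeff N = P.coeff N := by
    rw [coeff_C_mul, ← hprod,
      (monic_prod_of_monic _ _ fun i _ => monic_X_sub_C (f i)).coeff_natDegree, mul_one]
  rw [← sub_eq_zero]
  by_contra hne
  refine hne (eq_zero_of_natDegree_lt_card_of_eval_eq_zero _ hf (fun i => ?_) ?_)
  · rw [eval_sub, hroots, hQ, eval_mul, eval_prod,
      prod_eq_zero (mem_univ i) (by rw [eval_sub, eval_X, eval_C, sub_self]), mul_zero, sub_zero]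
  · rw [natDegree_lt_iff_degree_lt hne, degree_lt_iff_coeff_zero]
    intro m hm
    obtain rfl | hlt := hm.eq_or_lt
    · rw [coeff_sub, hQcoeff, sub_self]
    · rw [coeff_sub, coeff_eq_zero_of_natDegree_lt (hdeg.trans_lt hlt),
        coeff_eq_zero_of_natDegree_lt (hQdeg.trans_lt hlt), sub_zero]

theorem Polynomial.natDegree_sum_C_mul_X_pow_le {R : Type*} [Semiring R] {n : ℕ}
    {e : Fin (n + 1) → ℕ} (he : Monotone e) (c : Fin (n + 1) → R) :
    (∑ i, C (c i) * X ^ e i).natDegree ≤ e (Fin.last n) :=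
  natDegree_sum_le_of_forall_le _ _ fun i _ =>
    (natDegree_C_mul_X_pow_le _ _).trans (he (Fin.le_last i))

theorem Polynomial.coeff_sum_C_mul_X_pow_last {R : Type*} [Semiring R] {n : ℕ}
    {e : Fin (n + 1) → ℕ} (he : StrictMono e) (c : Fin (n + 1) → R) :
    (∑ i, C (c i) * X ^ e i).coeff (e (Fin.last n)) = c (Fin.last n) := by
  simp [finsetSum_coeff, he.injective.eq_iff]

section Moore

variable {k : Type*} [CommRing k] (p : ℕ) {n : ℕ}

theorem eval_det_mooreMatrix_snoc_X (b : Fin n → k) (x : k) :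
    (mooreMatrix p (Fin.snoc (C ∘ b) X)).det.eval x = (mooreMatrix p (Fin.snoc b x)).det := by
  rw [← coe_evalRingHom, RingHom.map_det, RingHom.mapMatrix_mooreMatrix, Fin.comp_snoc]
  simp [Function.comp_def]

theorem exists_det_mooreMatrix_snoc_X_eq_sum (b : Fin n → k) :
    ∃ c : Fin (n + 1) → k, c (Fin.last n) = (mooreMatrix p b).det ∧
      (mooreMatrix p (Fin.snoc (C ∘ b) X)).det = ∑ i, C (c i) * X ^ p ^ (i : ℕ) := by
  refine ⟨fun i => (-1) ^ ((i : ℕ) + n) *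
    (Matrix.of fun i' j' => b j' ^ p ^ (i.succAbove i' : ℕ)).det, ?_, ?_⟩
  · simp [mooreMatrix, Fin.succAbove_last, (Even.add_self n).neg_one_pow]
  · rw [det_succ_column _ (Fin.last n)]
    refine sum_congr rfl fun i _ => ?_
    have hminor :
        (mooreMatrix p (Fin.snoc (C ∘ b) X)).submatrix i.succAbove (Fin.last n).succAbove =
          C.mapMatrix (Matrix.of fun i' j' => b j' ^ p ^ (i.succAbove i' : ℕ)) := by
      ext i' j'
      simp [mooreMatrix, Fin.succAbove_last]
    rw [hminor, ← RingHom.map_det]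
    simp [mooreMatrix]

variable [CharP k p]

def fpCombination (b : Fin n → k) : (Fin n → ZMod p) →+ k :=
  AddMonoidHom.mk' (fun ε => ∑ j, ZMod.castHom (dvd_refl p) k (ε j) * b j) fun ε ε' => by
    simp only [Pi.add_apply, map_add, add_mul, sum_add_distrib]

theorem fpCombination_apply (b : Fin n → k) (ε : Fin n → ZMod p) :
    fpCombination p b ε = ∑ j, ZMod.castHom (dvd_refl p) k (ε j) * b j := rfl

theorem fpCombination_snoc (b : Fin n → k) (c : k) (ε : Fin n → ZMod p) (e : ZMod p) :
    fpCombination p (Fin.snoc b c) (Fin.snoc ε e) =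
      fpCombination p b ε + ZMod.castHom (dvd_refl p) k e * c := by
  simp [fpCombination_apply, Fin.sum_univ_castSucc]

variable [Fact p.Prime]

theorem fpCombination_pow_pow (b : Fin n → k) (ε : Fin n → ZMod p) (i : ℕ) :
    fpCombination p b ε ^ p ^ i = fpCombination p (fun j => b j ^ p ^ i) ε := by
  simp only [fpCombination_apply, sum_pow_char_pow, mul_pow, ← map_pow, ZMod.pow_card_pow]

theorem mooreMatrix_mulVec_castHom (b : Fin n → k) (ε : Fin n → ZMod p) :
    mooreMatrix p b *ᵥ (fun j => ZMod.castHom (dvd_refl p) k (ε j)) =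
      fun i : Fin n => fpCombination p b ε ^ p ^ (i : ℕ) := by
  ext i
  rw [fpCombination_pow_pow, fpCombination_apply]
  simp only [mulVec, dotProduct, mooreMatrix, of_apply, mul_comm]

theorem det_mooreMatrix_eq_zero_of_fpCombination_eq_zero [IsDomain k] {b : Fin n → k}
    {ε : Fin n → ZMod p} (hε : ε ≠ 0) (hcomb : fpCombination p b ε = 0) :
    (mooreMatrix p b).det = 0 := by
  refine exists_mulVec_eq_zero_iff.mp
    ⟨fun j => ZMod.castHom (dvd_refl p) k (ε j), fun h => hε ?_, ?_⟩
  · funext j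
    exact (ZMod.castHom (dvd_refl p) k).injective (by simpa using congrFun h j)
  · rw [mooreMatrix_mulVec_castHom, hcomb]
    funext i
    exact zero_pow (pow_ne_zero _ (Fact.out : p.Prime).ne_zero)

theorem det_mooreMatrix_snoc_X_of_injective [IsDomain k] {b : Fin n → k}
    (hb : Function.Injective (fpCombination p b)) :
    (mooreMatrix p (Fin.snoc (C ∘ b) X)).det =
      C (mooreMatrix p b).det * ∏ ε, (X - C (-fpCombination p b ε)) := by
  obtain ⟨c, hc, hP⟩ := exists_det_mooreMatrix_snoc_X_eq_sum p b
  have he : StrictMono fun i : Fin (n + 1) => p ^ (i : ℕ) :=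
    (pow_right_strictMono₀ (Fact.out : p.Prime).one_lt).comp Fin.val_strictMono
  have hcard : Fintype.card (Fin n → ZMod p) = p ^ (Fin.last n : ℕ) := by simp
  have hroot (ε : Fin n → ZMod p) :
      (mooreMatrix p (Fin.snoc (C ∘ b) X)).det.eval (-fpCombination p b ε) = 0 := by
    rw [eval_det_mooreMatrix_snoc_X]
    refine det_mooreMatrix_eq_zero_of_fpCombination_eq_zero p (ε := Fin.snoc ε 1)
      (fun h => by simpa using congrFun h (Fin.last n)) ?_
    simp [fpCombination_snoc]
  have hdeg := natDegree_sum_C_mul_X_pow_le he.monotone c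
  rw [← hP, ← hcard] at hdeg
  rw [eq_C_mul_prod_X_sub_C_of_natDegree_le (neg_injective.comp hb) hroot hdeg, hcard, hP,
    coeff_sum_C_mul_X_pow_last he, hc]
  rfl

theorem det_mooreMatrix_snoc [IsDomain k] (b : Fin n → k) (c : k) :
    (mooreMatrix p (Fin.snoc b c)).det =
      (mooreMatrix p b).det * ∏ ε, (c + fpCombination p b ε) := by
  by_cases hb : Function.Injective (fpCombination p b)
  · rw [← eval_det_mooreMatrix_snoc_X, det_mooreMatrix_snoc_X_of_injective p hb]
    simp [eval_prod, sub_neg_eq_add]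
  · obtain ⟨ε, hcomb, hε⟩ : ∃ ε, fpCombination p b ε = 0 ∧ ε ≠ 0 := by
      simpa [injective_iff_map_eq_zero] using hb
    rw [det_mooreMatrix_eq_zero_of_fpCombination_eq_zero p hε hcomb, zero_mul]
    refine det_mooreMatrix_eq_zero_of_fpCombination_eq_zero p (ε := Fin.snoc ε 0)
      (fun h => hε (funext fun j => by simpa using congrFun h j.castSucc)) ?_
    simp [fpCombination_snoc, hcomb]

end Moore

/-- Moore's product formula:
`Δ_n(a) = ∏_{i=1}^n ∏_{(ε_1,…,ε_{i-1}) ∈ 𝔽_p^{i-1}} (a_i + ε_{i-1}a_{i-1} + ⋯ + ε_1 a_1)`. -/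
theorem moore_product_formula
    {k : Type*} [Field k] (p : ℕ) [Fact p.Prime] [CharP k p]
    {n : ℕ} (a : Fin n → k) :
    (mooreMatrix p a).det =
      ∏ i : Fin n, ∏ ε : Fin (i : ℕ) → ZMod p,
        (a i + ∑ j : Fin (i : ℕ),
          ZMod.castHom (dvd_refl p) k (ε j) * a (Fin.castLE i.isLt.le j)) := by
  induction n with
  | zero => simp [mooreMatrix]
  | succ n ih =>
    have h := det_mooreMatrix_snoc p (Fin.init a) (a (Fin.last n))
    rw [Fin.snoc_init_self, ih] at h
    rw [h, Fin.prod_univ_castSucc]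
    -- `Fin.init a j` and `a (Fin.castLE _ j)` agree definitionally
    rfl
end

section
/- Let V ⊂ k be an F_p-vector subspace of dimension n of a field k of characteristic p, with basis v_1, ..., v_n. Then the structural polynomial P_V(X) = ∏_{v ∈ V} (X - v) satisfies P_V(X) = Δ_{n+1}(v_1,...,v_n,X)/Δ_n(v_1,...,v_n), it is an additive polynomial (P_V(x+y) = P_V(x) + P_V(y)), its leading term is X^{p^n}, and its coefficient of X is (-1)^n Δ_n(v)^{p-1}. -/
set_option linter.unusedSectionVars false
open Polynomial

lemma detMapAux {R S : Type*} [CommRing R] [CommRing S] {n : ℕ}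
    (M : Matrix (Fin n) (Fin n) R) (f : R →+* S) :
    (M.map f).det = f M.det := by
  rw [RingHom.map_det]
  rfl

section Aux

variable {k : Type*} [Field k] (p : ℕ) [Fact p.Prime] [CharP k p] {n : ℕ}

/-- Expansion of the polynomial Moore determinant along the last column. -/
lemma moore_expand (v : Fin n → k) :
    (mooreMatrix p (Fin.snoc (fun i => (C (v i) : Polynomial k)) X)).det
      = ∑ i : Fin (n + 1),
          C ((-1 : k) ^ ((i : ℕ) + n) *
            (Matrix.of fun i' j' : Fin n => v j' ^ p ^ ((i.succAbove i' : Fin (n+1)) : ℕ)).det)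
            * X ^ (p ^ (i : ℕ)) := by
  rw [Matrix.det_succ_column _ (Fin.last n)]
  refine Finset.sum_congr rfl fun i _ => ?_
  have h1 : mooreMatrix p (Fin.snoc (fun i => (C (v i) : Polynomial k)) X) i (Fin.last n)
      = X ^ p ^ (i : ℕ) := by
    simp [mooreMatrix]
  have h2 : (mooreMatrix p (Fin.snoc (fun i => (C (v i) : Polynomial k)) X)).submatrix
        i.succAbove (Fin.last n).succAbove
      = (Matrix.of fun i' j' : Fin n => v j' ^ p ^ ((i.succAbove i' : Fin (n+1)) : ℕ)).map C := by
    ext i' j'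
    simp [mooreMatrix, Fin.succAbove_last, Fin.snoc_castSucc, map_pow]
  rw [h1, h2, detMapAux]
  simp only [Fin.val_last, map_mul, map_pow, map_neg, map_one]
  ring

/-- Coefficient of `X^(p^i₀)` in the polynomial Moore determinant. -/
lemma moore_coeff (v : Fin n → k) (i₀ : Fin (n + 1)) :
    ((mooreMatrix p (Fin.snoc (fun i => (C (v i) : Polynomial k)) X)).det).coeff (p ^ (i₀ : ℕ))
      = (-1 : k) ^ ((i₀ : ℕ) + n) *
          (Matrix.of fun i' j' : Fin n => v j' ^ p ^ ((i₀.succAbove i' : Fin (n+1)) : ℕ)).det := by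
  rw [moore_expand, finset_sum_coeff]
  rw [Finset.sum_eq_single i₀]
  · rw [coeff_C_mul, coeff_X_pow, if_pos rfl, mul_one]
  · intro i _ hne
    rw [coeff_C_mul, coeff_X_pow, if_neg, mul_zero]
    intro h
    exact hne (Fin.ext (Nat.pow_right_injective (Fact.out (p := p.Prime)).two_le h.symm))
  · intro h; exact absurd (Finset.mem_univ i₀) h

lemma moore_eval (v : Fin n → k) (x : k) :
    ((mooreMatrix p (Fin.snoc (fun i => (C (v i) : Polynomial k)) X)).det).eval x
      = (mooreMatrix p (Fin.snoc v x)).det := by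
  have : ((mooreMatrix p (Fin.snoc (fun i => (C (v i) : Polynomial k)) X)).map
      (evalRingHom x)).det = (mooreMatrix p (Fin.snoc v x)).det := by
    congr 1
    ext i j
    simp only [Matrix.map_apply, mooreMatrix, Matrix.of_apply, coe_evalRingHom, eval_pow]
    congr 1
    refine Fin.lastCases ?_ ?_ j
    · simp
    · intro j'; simp
  rw [← this, detMapAux]
  rfl

lemma moore_eval_mem (v : Fin n → k) (c : Fin n → ZMod p) :
    (mooreMatrix p (Fin.snoc v (∑ i, ZMod.castHom (dvd_refl p) k (c i) * v i))).det = 0 := by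
  rw [← Matrix.exists_mulVec_eq_zero_iff]
  refine ⟨Fin.snoc (fun j => -(ZMod.castHom (dvd_refl p) k (c j))) 1, ?_, ?_⟩
  · intro h
    have := congrFun h (Fin.last n)
    simp at this
  · funext i
    simp only [Matrix.mulVec, dotProduct, mooreMatrix, Matrix.of_apply]
    rw [Fin.sum_univ_castSucc]
    simp only [Fin.snoc_castSucc, Fin.snoc_last, mul_one]
    have hs : (∑ j, ZMod.castHom (dvd_refl p) k (c j) * v j) ^ p ^ (i : ℕ)
        = ∑ j, ZMod.castHom (dvd_refl p) k (c j) * v j ^ p ^ (i : ℕ) := by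
      rw [sum_pow_char_pow]
      refine Finset.sum_congr rfl fun j _ => ?_
      rw [mul_pow, ← map_pow, ZMod.pow_card_pow]
    rw [hs, ← Finset.sum_add_distrib]
    simp only [Pi.zero_apply]
    refine Finset.sum_eq_zero fun j _ => by ring

/-- Key identity: `Δₙ(v) · ∏_{w∈V} (X - w) = Δₙ₊₁(v, X)`. -/
lemma moore_identity (v : Fin n → k)
    (hv : ∀ c : Fin n → ZMod p,
      (∑ i, ZMod.castHom (dvd_refl p) k (c i) * v i = 0) → c = 0) :
    C (mooreMatrix p v).det *
        (∏ c : Fin n → ZMod p,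
          (X - C (∑ i, ZMod.castHom (dvd_refl p) k (c i) * v i)))
      = (mooreMatrix p (Fin.snoc (fun i => (C (v i) : Polynomial k)) X)).det := by
  classical
  set φ : (Fin n → ZMod p) → k := fun c => ∑ i, ZMod.castHom (dvd_refl p) k (c i) * v i with hφ
  have hφinj : Function.Injective φ := by
    intro c c' h
    have h0 : φ (c - c') = 0 := by
      have hsplit : φ (c - c') = φ c - φ c' := by
        simp only [hφ, Pi.sub_apply, map_sub, sub_mul, Finset.sum_sub_distrib]
      rw [hsplit, h, sub_self]
    exact sub_eq_zero.mp (hv _ h0)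
  set PV : Polynomial k := ∏ c : Fin n → ZMod p, (X - C (φ c)) with hPVdef
  set D : Polynomial k :=
    (mooreMatrix p (Fin.snoc (fun i => (C (v i) : Polynomial k)) X)).det with hDdef
  have hmonic : PV.Monic := monic_prod_of_monic _ _ fun c _ => monic_X_sub_C _
  have hcard : Fintype.card (Fin n → ZMod p) = p ^ n := by
    simp [ZMod.card]
  have hdeg : PV.natDegree = p ^ n := by
    rw [hPVdef, natDegree_prod _ _ fun c _ => X_sub_C_ne_zero _]
    simp [hcard]
  have hp1 : (1 : ℕ) ≤ p := (Fact.out (p := p.Prime)).one_lt.le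
  have hDdeg : D.natDegree ≤ p ^ n := by
    rw [hDdef, moore_expand]
    refine natDegree_sum_le_of_forall_le _ _ fun i _ => ?_
    refine (natDegree_C_mul_le _ _).trans ?_
    rw [natDegree_X_pow]
    exact Nat.pow_le_pow_right hp1 (Nat.lt_succ_iff.mp i.isLt)
  have hDlead : D.coeff (p ^ n) = (mooreMatrix p v).det := by
    have := moore_coeff p v (Fin.last n)
    rw [Fin.val_last] at this
    rw [hDdef, this]
    have : (Matrix.of fun i' j' : Fin n =>
        v j' ^ p ^ (((Fin.last n).succAbove i' : Fin (n+1)) : ℕ)) = mooreMatrix p v := by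
      ext i' j'
      simp [Fin.succAbove_last, mooreMatrix]
    rw [this, ← two_mul, pow_mul]
    simp
  set E : Polynomial k := D - C (mooreMatrix p v).det * PV with hEdef
  have hE : E = 0 := by
    by_cases h0 : E = 0
    · exact h0
    refine Polynomial.eq_zero_of_natDegree_lt_card_of_eval_eq_zero E hφinj ?_ ?_
    · intro c
      rw [hEdef, eval_sub, eval_mul, eval_C]
      have h1 : D.eval (φ c) = 0 := by
        rw [hDdef, moore_eval]
        exact moore_eval_mem p v c
      have h2 : PV.eval (φ c) = 0 := by
        rw [hPVdef, eval_prod]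
        exact Finset.prod_eq_zero (Finset.mem_univ c) (by simp)
      rw [h1, h2, mul_zero, sub_zero]
    · rw [hcard]
      have hle : E.natDegree ≤ p ^ n := by
        refine (natDegree_sub_le _ _).trans (max_le hDdeg ?_)
        refine (natDegree_mul_le).trans ?_
        simp [hdeg]
      refine lt_of_le_of_ne hle fun heq => h0 ?_
      have hcoefftop : E.coeff (p ^ n) = 0 := by
        rw [hEdef, coeff_sub, coeff_C_mul, hDlead,
          show PV.coeff (p ^ n) = 1 by rw [← hdeg]; exact hmonic.coeff_natDegree]
        ring
      rw [← heq] at hcoefftop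
      exact leadingCoeff_eq_zero.mp hcoefftop
  have := sub_eq_zero.mp hE
  exact this.symm

lemma moore_det_ne_zero :
    ∀ {n : ℕ} (v : Fin n → k),
      (∀ c : Fin n → ZMod p,
        (∑ i, ZMod.castHom (dvd_refl p) k (c i) * v i = 0) → c = 0) →
      (mooreMatrix p v).det ≠ 0 := by
  intro n
  induction n with
  | zero =>
    intro v _
    simp [Matrix.det_fin_zero]
  | succ m ih =>
    intro v hv
    set v' : Fin m → k := Fin.init v with hv'def
    have hv' : ∀ c : Fin m → ZMod p,
        (∑ i, ZMod.castHom (dvd_refl p) k (c i) * v' i = 0) → c = 0 := by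
      intro c hc
      have hsum : ∑ i, ZMod.castHom (dvd_refl p) k ((Fin.snoc c 0 : Fin (m+1) → ZMod p) i) * v i = 0 := by
        rw [Fin.sum_univ_castSucc]
        simp only [Fin.snoc_castSucc, Fin.snoc_last, map_zero, zero_mul, add_zero]
        exact hc
      have h0 := hv _ hsum
      funext j
      have := congrFun h0 (Fin.castSucc j)
      simpa using this
    have key := moore_identity p v' hv'
    have hev : (mooreMatrix p v').det *
        ∏ c : Fin m → ZMod p,
          (v (Fin.last m) - ∑ i, ZMod.castHom (dvd_refl p) k (c i) * v' i)
        = (mooreMatrix p v).det := by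
      have := congrArg (eval (v (Fin.last m))) key
      rw [moore_eval, Fin.snoc_init_self, eval_mul, eval_C, eval_prod] at this
      simp only [eval_sub, eval_X, eval_C] at this
      exact this
    rw [← hev]
    refine mul_ne_zero (ih v' hv') ?_
    rw [Finset.prod_ne_zero_iff]
    intro c _ h
    have hlast : v (Fin.last m) = ∑ i, ZMod.castHom (dvd_refl p) k (c i) * v' i :=
      sub_eq_zero.mp h
    have hsum : ∑ i, ZMod.castHom (dvd_refl p) k
        ((Fin.snoc (fun j => -(c j)) 1 : Fin (m+1) → ZMod p) i) * v i = 0 := by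
      rw [Fin.sum_univ_castSucc]
      simp only [Fin.snoc_castSucc, Fin.snoc_last, map_one, one_mul, map_neg, neg_mul]
      rw [hlast, ← Finset.sum_add_distrib]
      refine Finset.sum_eq_zero fun j _ => ?_
      simp only [hv'def, Fin.init]
      ring
    have h0 := hv _ hsum
    have := congrFun h0 (Fin.last m)
    simp at this

end Aux

/-- Let `v₁, …, v_n` be an `𝔽_p`-basis of an `n`-dimensional subspace `V ⊆ k`.  The
structural polynomial `P_V(X) = ∏_{v ∈ V} (X - v)` (the product running over the
elements `Σ εᵢvᵢ` of `V`) satisfies `Δ_n(v) · P_V = Δ_{n+1}(v₁,…,v_n,X)`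
(i.e. `P_V = Δ_{n+1}(v,X)/Δ_n(v)`), it is additive, monic of degree `p^n`, and its
coefficient of `X` is `(-1)^n Δ_n(v)^{p-1}`. -/
theorem structural_polynomial_props
    {k : Type*} [Field k] (p : ℕ) [Fact p.Prime] [CharP k p]
    {n : ℕ} (v : Fin n → k)
    (hv : ∀ c : Fin n → ZMod p,
      (∑ i, ZMod.castHom (dvd_refl p) k (c i) * v i = 0) → c = 0)
    (PV : Polynomial k)
    (hPV : PV = ∏ c : Fin n → ZMod p,
      (Polynomial.X - C (∑ i, ZMod.castHom (dvd_refl p) k (c i) * v i))) :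
    C (mooreMatrix p v).det * PV
        = (mooreMatrix p (Fin.snoc (fun i => (C (v i) : Polynomial k)) Polynomial.X)).det ∧
    (∀ x y : k, PV.eval (x + y) = PV.eval x + PV.eval y) ∧
    PV.Monic ∧ PV.natDegree = p ^ n ∧
    PV.coeff 1 = (-1) ^ n * (mooreMatrix p v).det ^ (p - 1) := by
  have hid := moore_identity p v hv
  rw [← hPV] at hid
  have hΔ : (mooreMatrix p v).det ≠ 0 := moore_det_ne_zero p v hv
  have hmonic : PV.Monic := hPV ▸ monic_prod_of_monic _ _ fun c _ => monic_X_sub_C _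
  have hcard : Fintype.card (Fin n → ZMod p) = p ^ n := by simp [ZMod.card]
  have hdeg : PV.natDegree = p ^ n := by
    rw [hPV, natDegree_prod _ _ fun c _ => X_sub_C_ne_zero _]
    simp only [natDegree_X_sub_C]
    simp [hcard]
  have hp1 : (1 : ℕ) ≤ p := (Fact.out (p := p.Prime)).one_lt.le
  have hkey : ∀ z : k, (mooreMatrix p v).det * PV.eval z
      = ∑ i : Fin (n + 1),
          (-1 : k) ^ ((i : ℕ) + n) *
            (Matrix.of fun i' j' : Fin n =>
              v j' ^ p ^ ((i.succAbove i' : Fin (n+1)) : ℕ)).det * z ^ (p ^ (i : ℕ)) := by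
    intro z
    have h1 : (mooreMatrix p v).det * PV.eval z
        = eval z (C (mooreMatrix p v).det * PV) := by simp
    rw [h1, hid, moore_expand, eval_finset_sum]
    exact Finset.sum_congr rfl fun i _ => by simp
  refine ⟨hid, ?_, hmonic, hdeg, ?_⟩
  · intro x y
    apply mul_left_cancel₀ hΔ
    rw [mul_add, hkey, hkey, hkey, ← Finset.sum_add_distrib]
    refine Finset.sum_congr rfl fun i _ => ?_
    rw [add_pow_char_pow]
    ring
  · have h0 := moore_coeff p v 0
    have he : p ^ ((0 : Fin (n + 1)) : ℕ) = 1 := by simp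
    rw [he] at h0
    rw [show ((0 : Fin (n + 1)) : ℕ) = 0 from rfl, zero_add] at h0
    have hmat : (Matrix.of fun i' j' : Fin n =>
        v j' ^ p ^ (((0 : Fin (n+1)).succAbove i' : Fin (n+1)) : ℕ))
        = (mooreMatrix p v).map (frobenius k p) := by
      ext i' j'
      simp only [Matrix.of_apply, Matrix.map_apply, mooreMatrix, frobenius_def,
        Fin.succAbove_zero, Fin.val_succ]
      rw [← pow_mul, ← pow_succ]
    rw [hmat, detMapAux, frobenius_def] at h0
    apply mul_left_cancel₀ hΔ
    rw [← coeff_C_mul, hid, h0]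
    rw [show (mooreMatrix p v).det ^ p
        = (mooreMatrix p v).det * (mooreMatrix p v).det ^ (p - 1) by
      rw [← pow_succ', Nat.sub_add_cancel hp1]]
    ring
end

section
/- Let n ≥ 1, m ≥ 1 and let Y_1,...,Y_n, X_1,...,X_m be variables over F_p. Then Δ_n(Δ_{m+1}(Y_1,X_1,...,X_m), ..., Δ_{m+1}(Y_n,X_1,...,X_m)) = Δ_m(X_1,...,X_m)^{p+p^2+...+p^{n-1}} · Δ_{n+m}(Y_1,...,Y_n,X_1,...,X_m). -/
/-- The Moore determinant of an `r`-tuple `v` in a ring of characteristic `p`: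
the determinant of the matrix with `(i,j)` entry `v j ^ p ^ i`. -/
def mooreDet {R : Type*} [CommRing R] (p : ℕ) {r : ℕ} (v : Fin r → R) : R :=
  (Matrix.of fun i j : Fin r => v j ^ p ^ (i : ℕ)).det

namespace MooreNested

open Matrix Finset

variable {R : Type*} [CommRing R] (p : ℕ)

/-- Shifting all Frobenius exponents of a Moore matrix by `e` raises its determinant
to the `p ^ e`-th power. -/
lemma moore_shift [ExpChar R p] {m : ℕ} (X : Fin m → R) (e : ℕ) :
    (Matrix.of fun a b : Fin m => X b ^ p ^ ((a : ℕ) + e)).det = mooreDet p X ^ p ^ e := by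
  have h : mooreDet p X ^ p ^ e = iterateFrobenius R p e (mooreDet p X) := rfl
  rw [h, mooreDet, RingHom.map_det]
  congr 1
  ext a b
  simp only [RingHom.mapMatrix_apply, Matrix.map_apply, Matrix.of_apply,
    iterateFrobenius_def, ← pow_mul, ← pow_add]

/-- Cofactor coefficients of the Moore determinant `Δ_{m+1}(y, X)` viewed as a
`p`-polynomial in `y`, extended by zero to all of `ℕ`. -/
noncomputable def cfn {m : ℕ} (X : Fin m → R) (k : ℕ) : R :=
  if h : k < m + 1 then
    (-1) ^ k * (Matrix.of fun a b : Fin m =>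
      X b ^ p ^ (((⟨k, h⟩ : Fin (m + 1)).succAbove a : Fin (m + 1)) : ℕ)).det
  else 0

/-- Cofactor expansion of `Δ_{m+1}(y, X)` along the `y` column. -/
lemma moore_cons {m : ℕ} (X : Fin m → R) (y : R) :
    mooreDet p (Fin.cons y X) = ∑ i : Fin (m + 1), cfn p X (i : ℕ) * y ^ p ^ (i : ℕ) := by
  rw [mooreDet, Matrix.det_succ_column_zero]
  refine Finset.sum_congr rfl fun i _ => ?_
  have h1 : ((Matrix.of fun a b : Fin (m + 1) =>
      (Fin.cons y X : Fin (m + 1) → R) b ^ p ^ (a : ℕ)).submatrix i.succAbove Fin.succ)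
      = Matrix.of fun a b : Fin m =>
        X b ^ p ^ ((i.succAbove a : Fin (m + 1)) : ℕ) := by
    ext a b
    simp [Fin.cons_succ]
  rw [h1, cfn, dif_pos i.isLt]
  simp only [Matrix.of_apply, Fin.cons_zero, Fin.eta]
  ring

lemma cfn_zero [ExpChar R p] {m : ℕ} (X : Fin m → R) :
    cfn p X 0 = mooreDet p X ^ p := by
  rw [cfn, dif_pos (Nat.succ_pos m)]
  have h1 : ∀ a : Fin m, (((⟨0, Nat.succ_pos m⟩ : Fin (m + 1)).succAbove a : Fin (m + 1)) : ℕ)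
      = (a : ℕ) + 1 := by
    intro a
    simp [Fin.succAbove]
  simp_rw [h1]
  rw [moore_shift, pow_one, pow_zero, one_mul]

/-- `Δ_{m+1}(X l, X) = 0`: the Moore determinant with a repeated entry vanishes. -/
lemma moore_cons_self {m : ℕ} (X : Fin m → R) (l : Fin m) :
    mooreDet p (Fin.cons (X l) X) = 0 := by
  apply Matrix.det_zero_of_column_eq (i := (0 : Fin (m + 1))) (j := l.succ)
    (Fin.succ_ne_zero l).symm
  intro k
  simp [Fin.cons_succ]

/-- Coefficients of the `i`-th row operation. -/
noncomputable def gg {m : ℕ} (X : Fin m → R) (i t : ℕ) : R :=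
  if i ≤ t then cfn p X (t - i) ^ p ^ i else 0

lemma rowSum [ExpChar R p] {n m : ℕ} (X : Fin m → R) (i : Fin n) (z : R) :
    (∑ s : Fin n, gg p X (i : ℕ) (s : ℕ) * z ^ p ^ (s : ℕ)) +
      ∑ k : Fin m, gg p X (i : ℕ) (n + (k : ℕ)) * z ^ p ^ (n + (k : ℕ))
      = mooreDet p (Fin.cons z X) ^ p ^ (i : ℕ) := by
  have hp : p ^ (i : ℕ) ≠ 0 := pow_ne_zero _ (expChar_pos R p).ne'
  have step1 : (∑ s : Fin n, gg p X (i : ℕ) (s : ℕ) * z ^ p ^ (s : ℕ)) +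
      ∑ k : Fin m, gg p X (i : ℕ) (n + (k : ℕ)) * z ^ p ^ (n + (k : ℕ))
      = ∑ t ∈ range (n + m), gg p X (i : ℕ) t * z ^ p ^ t := by
    rw [← Fin.sum_univ_eq_sum_range (fun t => gg p X (i : ℕ) t * z ^ p ^ t) (n + m),
      Fin.sum_univ_add]
    simp
  have step2 : ∑ t ∈ range (n + m), gg p X (i : ℕ) t * z ^ p ^ t
      = ∑ t ∈ Ico (i : ℕ) ((i : ℕ) + (m + 1)), gg p X (i : ℕ) t * z ^ p ^ t := by
    refine (Finset.sum_subset ?_ ?_).symm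
    · intro t ht
      rw [Finset.mem_Ico] at ht
      rw [Finset.mem_range]
      have := i.isLt
      omega
    · intro t _ ht
      rw [Finset.mem_Ico] at ht
      rcases le_or_gt (i : ℕ) t with h | h
      · have h2 : ¬ t - (i : ℕ) < m + 1 := by omega
        rw [gg, if_pos h, cfn, dif_neg h2, zero_pow hp, zero_mul]
      · rw [gg, if_neg (not_le.mpr h), zero_mul]
  have step3 : ∑ t ∈ Ico (i : ℕ) ((i : ℕ) + (m + 1)), gg p X (i : ℕ) t * z ^ p ^ t
      = ∑ k ∈ range (m + 1), cfn p X k ^ p ^ (i : ℕ) * z ^ p ^ ((i : ℕ) + k) := by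
    rw [Finset.sum_Ico_eq_sum_range]
    simp only [Nat.add_sub_cancel_left]
    refine Finset.sum_congr rfl fun k _ => ?_
    rw [gg, if_pos (Nat.le_add_right _ _), Nat.add_sub_cancel_left]
  have step4 : mooreDet p (Fin.cons z X) ^ p ^ (i : ℕ)
      = ∑ k ∈ range (m + 1), cfn p X k ^ p ^ (i : ℕ) * z ^ p ^ ((i : ℕ) + k) := by
    rw [moore_cons, sum_pow_char_pow,
      ← Fin.sum_univ_eq_sum_range (fun k => cfn p X k ^ p ^ (i : ℕ) * z ^ p ^ ((i : ℕ) + k))]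
    refine Finset.sum_congr rfl fun k _ => ?_
    rw [mul_pow, ← pow_mul, ← pow_add, Nat.add_comm (k : ℕ) (i : ℕ)]
  rw [step1, step2, step3, step4]

/-- The key matrix identity, valid over any commutative ring of exponential
characteristic `p`. -/
lemma key [ExpChar R p] {n m : ℕ} (Y : Fin n → R) (X : Fin m → R) :
    mooreDet p X ^ (∑ i ∈ range n, p ^ (i + 1)) * mooreDet p (Fin.append Y X)
      = mooreDet p (fun j : Fin n => mooreDet p (Fin.cons (Y j) X))
          * mooreDet p X ^ p ^ n := by
  have hp : ∀ i : ℕ, p ^ i ≠ 0 := fun i => pow_ne_zero _ (expChar_pos R p).ne'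
  set T : Matrix (Fin n) (Fin n) R := Matrix.of fun i s => gg p X (i : ℕ) (s : ℕ) with hT
  set U : Matrix (Fin n) (Fin m) R := Matrix.of fun i k => gg p X (i : ℕ) (n + (k : ℕ)) with hU
  set M₁ : Matrix (Fin n) (Fin n) R := Matrix.of fun i j => Y j ^ p ^ (i : ℕ) with hM₁
  set M₂ : Matrix (Fin n) (Fin m) R := Matrix.of fun i l => X l ^ p ^ (i : ℕ) with hM₂
  set M₃ : Matrix (Fin m) (Fin n) R := Matrix.of fun k j => Y j ^ p ^ (n + (k : ℕ)) with hM₃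
  set M₄ : Matrix (Fin m) (Fin m) R := Matrix.of fun k l => X l ^ p ^ (n + (k : ℕ)) with hM₄
  set A : Matrix (Fin n) (Fin n) R :=
    Matrix.of fun i j => mooreDet p (Fin.cons (Y j) X) ^ p ^ (i : ℕ) with hA
  have h11 : T * M₁ + U * M₃ = A := by
    ext i j
    simp only [Matrix.add_apply, Matrix.mul_apply, hT, hU, hM₁, hM₃, hA, Matrix.of_apply]
    exact rowSum p X i (Y j)
  have h12 : T * M₂ + U * M₄ = 0 := by
    ext i l
    simp only [Matrix.add_apply, Matrix.mul_apply, hT, hU, hM₂, hM₄, Matrix.of_apply,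
      Matrix.zero_apply]
    rw [rowSum p X i (X l), moore_cons_self, zero_pow (hp _)]
  have hmul : fromBlocks T U 0 1 * fromBlocks M₁ M₂ M₃ M₄ = fromBlocks A 0 M₃ M₄ := by
    rw [Matrix.fromBlocks_multiply, h11, h12, Matrix.zero_mul, Matrix.zero_mul,
      Matrix.one_mul, Matrix.one_mul, zero_add, zero_add]
  have hdetE : (fromBlocks T U (0 : Matrix (Fin m) (Fin n) R)
      (1 : Matrix (Fin m) (Fin m) R)).det = mooreDet p X ^ (∑ i ∈ range n, p ^ (i + 1)) := by
    rw [Matrix.det_fromBlocks_zero₂₁, Matrix.det_one, mul_one]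
    rw [Matrix.det_of_upperTriangular (by
      intro i j hij
      simp only [hT, Matrix.of_apply, gg]
      rw [if_neg]
      exact not_le.mpr hij)]
    have : ∀ i : Fin n, T i i = (mooreDet p X ^ p) ^ p ^ (i : ℕ) := by
      intro i
      simp only [hT, Matrix.of_apply, gg, if_pos le_rfl, Nat.sub_self, cfn_zero p X]
    simp_rw [this, ← pow_mul]
    rw [Finset.prod_pow_eq_pow_sum]
    congr 1
    rw [← Fin.sum_univ_eq_sum_range (fun i => p ^ (i + 1)) n]
    exact Finset.sum_congr rfl fun i _ => by rw [pow_succ, mul_comm]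
  have hdetM : (fromBlocks M₁ M₂ M₃ M₄).det = mooreDet p (Fin.append Y X) := by
    have hsub : fromBlocks M₁ M₂ M₃ M₄ =
        (Matrix.of fun a b : Fin (n + m) =>
          Fin.append Y X b ^ p ^ (a : ℕ)).submatrix finSumFinEquiv finSumFinEquiv := by
      ext a b
      cases a with
      | inl i => cases b with
        | inl j => simp [hM₁, Fin.append_left]
        | inr l => simp [hM₂, Fin.append_right]
      | inr k => cases b with
        | inl j => simp [hM₃, Fin.append_left]
        | inr l => simp [hM₄, Fin.append_right]
    rw [hsub, Matrix.det_submatrix_equiv_self, mooreDet]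
  have hdetM₄ : M₄.det = mooreDet p X ^ p ^ n := by
    have : M₄ = Matrix.of fun k l : Fin m => X l ^ p ^ ((k : ℕ) + n) := by
      ext k l
      simp only [hM₄, Matrix.of_apply]
      rw [Nat.add_comm]
    rw [this, moore_shift]
  have hdetA : A.det = mooreDet p (fun j : Fin n => mooreDet p (Fin.cons (Y j) X)) := rfl
  have := congrArg Matrix.det hmul
  rw [Matrix.det_mul, hdetE, hdetM, Matrix.det_fromBlocks_zero₁₂, hdetA, hdetM₄] at this
  exact this

/-- The Moore determinant of a family of distinct variables is nonzero. -/
lemma moore_X_ne_zero (p : ℕ) [Fact p.Prime] {σ : Type*} [DecidableEq σ] {m : ℕ}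
    (u : Fin m → σ) (hu : Function.Injective u) :
    mooreDet p (fun j => (MvPolynomial.X (u j) : MvPolynomial σ (ZMod p))) ≠ 0 := by
  have hp2 : 2 ≤ p := (Fact.out : p.Prime).two_le
  set d₀ : σ →₀ ℕ := ∑ l : Fin m, Finsupp.single (u l) (p ^ (l : ℕ)) with hd₀
  have happ : ∀ (e : Fin m → ℕ) (t : Fin m),
      (∑ l : Fin m, Finsupp.single (u l) (e l)) (u t) = e t := by
    intro e t
    rw [Finsupp.finset_sum_apply]
    simp only [Finsupp.single_apply, hu.eq_iff]
    simp
  have hcoeff : MvPolynomial.coeff d₀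
      (mooreDet p (fun j => (MvPolynomial.X (u j) : MvPolynomial σ (ZMod p)))) = 1 := by
    rw [mooreDet, Matrix.det_apply]
    rw [MvPolynomial.coeff_sum]
    have hterm : ∀ τ : Equiv.Perm (Fin m),
        MvPolynomial.coeff d₀ (Equiv.Perm.sign τ •
          ∏ l : Fin m, (Matrix.of fun i j : Fin m =>
            (MvPolynomial.X (u j) : MvPolynomial σ (ZMod p)) ^ p ^ (i : ℕ)) (τ l) l)
        = if τ = 1 then 1 else 0 := by
      intro τ
      have hprod : (∏ l : Fin m, (Matrix.of fun i j : Fin m =>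
            (MvPolynomial.X (u j) : MvPolynomial σ (ZMod p)) ^ p ^ (i : ℕ)) (τ l) l)
          = MvPolynomial.monomial (∑ l : Fin m, Finsupp.single (u l) (p ^ (τ l : ℕ))) 1 := by
        rw [MvPolynomial.monomial_sum_one]
        refine Finset.prod_congr rfl fun l _ => ?_
        rw [Matrix.of_apply, MvPolynomial.X_pow_eq_monomial]
      rw [hprod, MvPolynomial.coeff_smul, MvPolynomial.coeff_monomial]
      have hiff : (∑ l : Fin m, Finsupp.single (u l) (p ^ (τ l : ℕ))) = d₀ ↔ τ = 1 := by
        constructor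
        · intro h
          ext t
          have := congrArg (fun f => f (u t)) h
          simp only [hd₀, happ] at this
          exact Nat.pow_right_injective hp2 this
        · rintro rfl
          simp [hd₀]
      by_cases hτ : τ = 1
      · subst hτ
        rw [if_pos (hiff.mpr rfl), if_pos rfl]
        simp
      · rw [if_neg (fun h => hτ (hiff.mp h)), if_neg hτ, smul_zero]
    rw [Finset.sum_congr rfl fun τ _ => hterm τ]
    simp
  intro h
  rw [h] at hcoeff
  simp at hcoeff

end MooreNested

/-- For variables `Y₁,…,Y_n, X₁,…,X_m` over `𝔽_p`:
`Δ_n(Δ_{m+1}(Y₁,X₁,…,X_m), …, Δ_{m+1}(Y_n,X₁,…,X_m))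
  = Δ_m(X₁,…,X_m)^{p+p²+⋯+p^{n-1}} · Δ_{n+m}(Y₁,…,Y_n,X₁,…,X_m)`. -/
theorem mooreDet_nested
    (p : ℕ) [Fact p.Prime] (n m : ℕ) (hn : 1 ≤ n) (hm : 1 ≤ m) :
    mooreDet p (fun i : Fin n =>
        mooreDet p (Fin.cons
          (MvPolynomial.X (Sum.inl i) : MvPolynomial (Fin n ⊕ Fin m) (ZMod p))
          (fun j : Fin m => MvPolynomial.X (Sum.inr j)))) =
      mooreDet p (fun j : Fin m =>
          (MvPolynomial.X (Sum.inr j) : MvPolynomial (Fin n ⊕ Fin m) (ZMod p)))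
        ^ (∑ i ∈ Finset.Ico 1 n, p ^ i) *
      mooreDet p (Fin.append
        (fun i : Fin n =>
          (MvPolynomial.X (Sum.inl i) : MvPolynomial (Fin n ⊕ Fin m) (ZMod p)))
        (fun j : Fin m => MvPolynomial.X (Sum.inr j))) := by
  classical
  set R := MvPolynomial (Fin n ⊕ Fin m) (ZMod p)
  set Yv : Fin n → R := fun i => MvPolynomial.X (Sum.inl i) with hYv
  set Xv : Fin m → R := fun j => MvPolynomial.X (Sum.inr j) with hXv
  have hW : mooreDet p Xv ≠ 0 :=
    MooreNested.moore_X_ne_zero p (Sum.inr : Fin m → Fin n ⊕ Fin m)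
      (fun a b h => Sum.inr.inj h)
  have hkey := MooreNested.key p Yv Xv
  have hsum : (∑ i ∈ Finset.range n, p ^ (i + 1))
      = (∑ i ∈ Finset.Ico 1 n, p ^ i) + p ^ n := by
    have h1 : ∑ i ∈ Finset.Ico 1 (n + 1), p ^ i = ∑ i ∈ Finset.range n, p ^ (i + 1) := by
      rw [Finset.sum_Ico_eq_sum_range]
      simp only [Nat.add_sub_cancel]
      exact Finset.sum_congr rfl fun i _ => by rw [Nat.add_comm]
    rw [← h1, Finset.sum_Ico_succ_top hn]
  rw [hsum, pow_add] at hkey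
  have hkey2 : (mooreDet p Xv ^ (∑ i ∈ Finset.Ico 1 n, p ^ i)
        * mooreDet p (Fin.append Yv Xv)) * mooreDet p Xv ^ p ^ n
      = mooreDet p (fun j : Fin n => mooreDet p (Fin.cons (Yv j) Xv))
        * mooreDet p Xv ^ p ^ n := by
    rw [← hkey]; ring
  have := mul_right_cancel₀ (pow_ne_zero _ hW) hkey2
  exact this.symm
end

section
/- Let k be an algebraically closed field of characteristic p > 0, and let P, Q ∈ k[X] be coprime with 0 ≤ deg Q < deg P < p. Let D(Z) ∈ k[Z] be the discriminant in degree deg P of P(X) - Z·Q(X). Then (P/Q)' can be written as A/(B·Q) with A coprime to Q, A(X) = ∏_{i=1}^d (X - x_i) for d = deg P + rdeg Q - 1 (where rdeg Q is the number of distinct roots of Q), and D(Z) = c·∏_{i=1}^d (Z - P(x_i)/Q(x_i)) for some nonzero constant c. In particular deg D = deg P + rdeg Q - 1. -/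
open Polynomial
open scoped Classical

/-!
The numerator `W = P'Q - PQ'` of `(P/Q)'` has degree `deg P + deg Q - 1`, its top coefficient
being `(deg P - deg Q)·lc P·lc Q`. At a root of `Q` of multiplicity `e` it vanishes to order exactly
`e - 1`, because `e < p` and `P` does not vanish there. Removing these `deg Q - rdeg Q` roots from
those of `W` leaves `d = deg P + rdeg Q - 1` roots `xᵢ`, none of them a root of `Q`.

For `F = P - zQ` one has `F'(y)Q(y) = W(y)` at every root `y` of `F`. Both `Res(F, Q)` and
`Res(F, W)` can be computed over the roots of either polynomial; over the roots of `Q` and `W`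
this turns the discriminant into a constant times `∏ᵢ F(xᵢ) = ∏ᵢ -Q(xᵢ)·(z - P(xᵢ)/Q(xᵢ))`.
Since `deg Q < deg P`, `F` has the degree and leading coefficient of `P`, so that constant does
not depend on `z`.
-/

theorem Multiset.exists_univ_map_eq {α : Type*} (s : Multiset α) {N : ℕ} (h : card s = N) :
    ∃ x : Fin N → α, Finset.univ.val.map x = s := by
  have hN : s.toList.length = N := by rw [length_toList, h]
  refine ⟨fun i => s.toList[i.cast hN.symm], ?_⟩
  rw [Fin.univ_val_map]
  conv_rhs => rw [← coe_toList s]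
  congr 1
  subst hN
  exact List.ofFn_getElem

theorem CharP.natCast_ne_zero_of_pos_of_lt {R : Type*} [AddMonoidWithOne R] {p : ℕ} [CharP R p]
    {e : ℕ} (he : 0 < e) (hep : e < p) : (e : R) ≠ 0 := fun h =>
    (Nat.le_of_dvd he ((CharP.cast_eq_zero_iff R p e).mp h)).not_gt hep

theorem IsCoprime.not_isRoot_of_isRoot {R : Type*} [CommRing R] [Nontrivial R] {P Q : R[X]}
    (h : IsCoprime P Q) {y : R} (hQ : Q.IsRoot y) : ¬P.IsRoot y := by
  obtain ⟨u, v, huv⟩ := h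
  intro hP
  simpa [hP.eq_zero, hQ.eq_zero] using congrArg (eval y) huv

namespace Polynomial

section CommRing

variable {R : Type*} [CommRing R]

theorem rootMultiplicity_sub_of_pow_dvd {p q : R[X]} {a : R} (hq : q ≠ 0)
    (hp : (X - C a) ^ (q.rootMultiplicity a + 1) ∣ p) :
    (p - q).rootMultiplicity a = q.rootMultiplicity a := by
  have hq_ndvd : ¬(X - C a) ^ (q.rootMultiplicity a + 1) ∣ q :=
    (rootMultiplicity_le_iff hq a _).mp le_rfl
  have hpq : p - q ≠ 0 := by
    rw [sub_ne_zero]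
    rintro rfl
    exact hq_ndvd hp
  refine le_antisymm ((rootMultiplicity_le_iff hpq a _).mpr fun h => hq_ndvd ?_) ?_
  · have := dvd_sub hp h
    rwa [sub_sub_cancel] at this
  · exact (le_rootMultiplicity_iff hpq).mpr
      (dvd_sub ((pow_dvd_pow _ (Nat.le_succ _)).trans hp) (pow_rootMultiplicity_dvd q a))

theorem coeff_derivative_mul_natDegree_add_sub_one (f g : R[X]) :
    (derivative f * g).coeff (f.natDegree + g.natDegree - 1)
      = f.natDegree * (f.leadingCoeff * g.leadingCoeff) := by
  rcases Nat.eq_zero_or_pos f.natDegree with h0 | hpos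
  · simp [derivative_of_natDegree_zero h0, h0]
  rw [show f.natDegree + g.natDegree - 1 = (f.natDegree - 1) + g.natDegree by omega,
    coeff_mul_add_eq_of_natDegree_le (natDegree_derivative_le f) le_rfl, coeff_derivative,
    Nat.sub_add_cancel hpos, Nat.cast_sub hpos]
  simp only [Nat.cast_one, sub_add_cancel, leadingCoeff]
  ring

theorem coeff_derivative_mul_sub_mul_derivative (P Q : R[X]) :
    (derivative P * Q - P * derivative Q).coeff (P.natDegree + Q.natDegree - 1)
      = ((P.natDegree : R) - Q.natDegree) * (P.leadingCoeff * Q.leadingCoeff) := by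
  rw [coeff_sub, mul_comm P, add_comm P.natDegree, coeff_derivative_mul_natDegree_add_sub_one,
    add_comm, coeff_derivative_mul_natDegree_add_sub_one]
  ring

theorem derivative_mul_sub_mul_derivative_ne_zero {P Q : R[X]}
    (h : ((P.natDegree : R) - Q.natDegree) * (P.leadingCoeff * Q.leadingCoeff) ≠ 0) :
    derivative P * Q - P * derivative Q ≠ 0 := fun h0 =>
  h (by rw [← coeff_derivative_mul_sub_mul_derivative, h0, coeff_zero])

theorem natDegree_derivative_mul_sub_mul_derivative {P Q : R[X]}
    (h : ((P.natDegree : R) - Q.natDegree) * (P.leadingCoeff * Q.leadingCoeff) ≠ 0) :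
    (derivative P * Q - P * derivative Q).natDegree = P.natDegree + Q.natDegree - 1 := by
  have hW : derivative P * Q - P * derivative Q = wronskian Q P := by rw [wronskian]; ring
  have := natDegree_wronskian_lt_add (hW ▸ derivative_mul_sub_mul_derivative_ne_zero h)
  rw [← coeff_derivative_mul_sub_mul_derivative] at h
  rw [← hW] at this
  exact le_antisymm (by omega) (le_natDegree_of_ne_zero h)

variable [IsDomain R]

theorem rootMultiplicity_derivative_mul_sub_mul_derivative {P Q : R[X]} {y : R}
    (hQ : Q.IsRoot y) (hP : ¬P.IsRoot y) (he : (Q.rootMultiplicity y : R) ≠ 0) :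
    (derivative P * Q - P * derivative Q).rootMultiplicity y = Q.rootMultiplicity y - 1 := by
  have hQ0 : Q ≠ 0 := by rintro rfl; simp at he
  have hP0 : P ≠ 0 := by rintro rfl; simp at hP
  have hQ' := derivative_rootMultiplicity_of_root_of_mem_nonZeroDivisors hQ
    (mem_nonZeroDivisors_of_ne_zero he)
  have hpos := (rootMultiplicity_pos hQ0).mpr hQ
  -- a simple root of `Q` is not a root of `Q'`, so `Q'` cannot vanish
  have hQ'0 : derivative Q ≠ 0 := by
    intro h0
    have := (one_lt_rootMultiplicity_iff_isRoot hQ0).mpr ⟨hQ, by simp [h0]⟩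
    rw [h0, rootMultiplicity_zero] at hQ'
    omega
  have hPQ' : (P * derivative Q).rootMultiplicity y = Q.rootMultiplicity y - 1 := by
    rw [rootMultiplicity_mul (mul_ne_zero hP0 hQ'0), rootMultiplicity_eq_zero hP, hQ', zero_add]
  rw [← hPQ']
  refine rootMultiplicity_sub_of_pow_dvd (mul_ne_zero hP0 hQ'0) ?_
  rw [hPQ', Nat.sub_add_cancel hpos]
  exact dvd_mul_of_dvd_right (pow_rootMultiplicity_dvd Q y) _

theorem leadingCoeff_pow_mul_prod_roots_eval {f g : R[X]} (hf : f.Splits) (hg : g.Splits) :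
    f.leadingCoeff ^ g.natDegree * (f.roots.map g.eval).prod
      = (-1) ^ (f.natDegree * g.natDegree)
        * (g.leadingCoeff ^ f.natDegree * (g.roots.map f.eval).prod) := by
  rw [← resultant_eq_prod_eval f g _ le_rfl hf, ← resultant_eq_prod_eval g f _ le_rfl hg,
    resultant_comm]

theorem exists_roots_eq_add_roots_sub_dedup {W Q : R[X]} (hQ : Q ≠ 0)
    (h : ∀ y ∈ Q.roots, W.rootMultiplicity y = Q.rootMultiplicity y - 1) :
    ∃ S : Multiset R, W.roots = S + (Q.roots - Q.roots.dedup) ∧ ∀ y ∈ S, ¬Q.IsRoot y := by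
  have hcount (y : R) : (Q.roots - Q.roots.dedup).count y = W.roots.count y ∨ y ∉ Q.roots := by
    rw [Multiset.count_sub, Multiset.count_dedup, count_roots, count_roots]
    by_cases hy : y ∈ Q.roots
    · simp [hy, h y hy]
    · exact Or.inr hy
  have hle : Q.roots - Q.roots.dedup ≤ W.roots := by
    refine Multiset.le_iff_count.mpr fun y => ?_
    rcases hcount y with hy | hy
    · exact hy.le
    · have hyT : y ∉ Q.roots - Q.roots.dedup := fun h => hy (Multiset.mem_of_le tsub_le_self h)
      simp [Multiset.count_eq_zero_of_notMem hyT]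
  refine ⟨W.roots - (Q.roots - Q.roots.dedup), (tsub_add_cancel_of_le hle).symm, fun y hy hQy => ?_⟩
  have hyQ : y ∈ Q.roots := (mem_roots hQ).mpr hQy
  rcases hcount y with hc | hc
  · exact Multiset.count_eq_zero.mp (by rw [Multiset.count_sub, hc, Nat.sub_self]) hy
  · exact hc hyQ

theorem exists_roots_derivative_mul_sub_mul_derivative_eq {p : ℕ} [CharP R p] {P Q : R[X]}
    (hcop : IsCoprime P Q) (hQ : Q ≠ 0) (hp : Q.natDegree < p) :
    ∃ S : Multiset R, (derivative P * Q - P * derivative Q).roots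
      = S + (Q.roots - Q.roots.dedup) ∧ ∀ y ∈ S, ¬Q.IsRoot y := by
  refine exists_roots_eq_add_roots_sub_dedup hQ fun y hy => ?_
  have hy' := isRoot_of_mem_roots hy
  have hmult := (Multiset.count_le_card y Q.roots).trans (card_roots' Q)
  rw [count_roots] at hmult
  exact rootMultiplicity_derivative_mul_sub_mul_derivative hy' (hcop.not_isRoot_of_isRoot hy')
    (CharP.natCast_ne_zero_of_pos_of_lt ((rootMultiplicity_pos hQ).mpr hy') (by omega))

end CommRing

section Field

variable {K : Type*} [Field K]

theorem exists_mul_eq_prod_X_sub_C_mul {W Q : K[X]} (hW : W.Splits) (hQ : Q.Splits) (hW0 : W ≠ 0)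
    (hQ0 : Q ≠ 0) {S : Multiset K} (h : W.roots = S + (Q.roots - Q.roots.dedup)) :
    ∃ B ≠ 0, W * B = (S.map (X - C ·)).prod * Q := by
  set rad := (Q.roots.dedup.map (X - C ·)).prod
  have hrad : rad ≠ 0 := (monic_multiset_prod_of_monic _ _ fun a _ => monic_X_sub_C a).ne_zero
  have hWlc : W.leadingCoeff ≠ 0 := leadingCoeff_ne_zero.mpr hW0
  have hQlc : Q.leadingCoeff ≠ 0 := leadingCoeff_ne_zero.mpr hQ0
  refine ⟨C (Q.leadingCoeff / W.leadingCoeff) * rad,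
    mul_ne_zero (C_ne_zero.mpr (div_ne_zero hQlc hWlc)) hrad, ?_⟩
  set T := Q.roots - Q.roots.dedup
  have hWfac : W = C W.leadingCoeff * ((S.map (X - C ·)).prod * (T.map (X - C ·)).prod) := by
    conv_lhs => rw [hW.eq_prod_roots]
    rw [h, Multiset.map_add, Multiset.prod_add]
  have hQfac : Q = C Q.leadingCoeff * ((T.map (X - C ·)).prod * rad) := by
    conv_lhs => rw [hQ.eq_prod_roots, ← tsub_add_cancel_of_le (Multiset.dedup_le Q.roots)]
    rw [Multiset.map_add, Multiset.prod_add]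
  have hC : C W.leadingCoeff * C (Q.leadingCoeff / W.leadingCoeff) = C Q.leadingCoeff := by
    rw [← C_mul, mul_div_cancel₀ _ hWlc]
  linear_combination (C (Q.leadingCoeff / W.leadingCoeff) * rad) * hWfac
    - (S.map (X - C ·)).prod * hQfac
    + ((S.map (X - C ·)).prod * (T.map (X - C ·)).prod * rad) * hC

theorem card_add_natDegree_eq_of_roots_eq {W Q : K[X]} (hW : W.Splits) (hQ : Q.Splits)
    {S : Multiset K} (h : W.roots = S + (Q.roots - Q.roots.dedup)) :
    Multiset.card S + Q.natDegree = W.natDegree + Q.roots.toFinset.card := by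
  have hcard := congrArg Multiset.card h
  have hr := Q.roots.toFinset_card_le
  rw [Multiset.card_add, Multiset.card_sub (Multiset.dedup_le _), ← Multiset.card_toFinset,
    ← hW.natDegree_eq_card_roots] at hcard
  rw [← hQ.natDegree_eq_card_roots] at hcard hr
  omega

theorem natCast_sub_mul_leadingCoeff_mul_ne_zero {p : ℕ} [CharP K p] {P Q : K[X]} (hQ : Q ≠ 0)
    (hdeg : Q.natDegree < P.natDegree) (hp : P.natDegree < p) :
    ((P.natDegree : K) - Q.natDegree) * (P.leadingCoeff * Q.leadingCoeff) ≠ 0 := by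
  refine mul_ne_zero ?_ (mul_ne_zero (leadingCoeff_ne_zero.mpr (ne_zero_of_natDegree_gt hdeg))
    (leadingCoeff_ne_zero.mpr hQ))
  rw [← Nat.cast_sub hdeg.le]
  exact CharP.natCast_ne_zero_of_pos_of_lt (by omega) (by omega)

theorem prod_map_eval_sub_C_mul {P Q : K[X]} {S : Multiset K} (hS : ∀ y ∈ S, ¬Q.IsRoot y)
    (z : K) :
    (S.map fun y => (P - C z * Q).eval y).prod
      = (S.map fun y => -Q.eval y).prod * (S.map fun y => z - P.eval y / Q.eval y).prod := by
  rw [← Multiset.prod_map_mul]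
  refine congrArg _ (Multiset.map_congr rfl fun y hy => ?_)
  have hQy : Q.eval y ≠ 0 := hS y hy
  simp only [eval_sub, eval_mul, eval_C]
  field_simp
  ring

theorem exists_prod_map_eval_add_eq {P Q : K[X]} (hcop : IsCoprime P Q) {S T : Multiset K}
    (hS : ∀ y ∈ S, ¬Q.IsRoot y) (hT : ∀ y ∈ T, Q.IsRoot y) :
    ∃ c ≠ 0, ∀ z : K, ((S + T).map fun y => (P - C z * Q).eval y).prod
      = c * (S.map fun y => z - P.eval y / Q.eval y).prod := by
  have hTeval (z : K) : (T.map fun y => (P - C z * Q).eval y) = T.map P.eval :=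
    Multiset.map_congr rfl fun y hy => by simp [(hT y hy).eq_zero]
  refine ⟨(S.map fun y => -Q.eval y).prod * (T.map P.eval).prod, mul_ne_zero ?_ ?_, fun z => ?_⟩
  · exact Multiset.prod_ne_zero fun h0 => by
      obtain ⟨y, hy, h⟩ := Multiset.mem_map.mp h0
      exact hS y hy (neg_eq_zero.mp h)
  · exact Multiset.prod_ne_zero fun h0 => by
      obtain ⟨y, hy, h⟩ := Multiset.mem_map.mp h0
      exact hcop.not_isRoot_of_isRoot (hT y hy) h
  rw [Multiset.map_add, Multiset.prod_add, prod_map_eval_sub_C_mul hS, hTeval]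
  ring

variable [IsAlgClosed K]

theorem exists_prod_roots_eval_derivative_sub_C_mul_eq {P Q : K[X]} (hcop : IsCoprime P Q)
    (hdeg : Q.natDegree < P.natDegree) (hW : derivative P * Q - P * derivative Q ≠ 0) :
    ∃ c ≠ 0, ∀ z : K,
      ((P - C z * Q).roots.map fun y => (derivative P - C z * derivative Q).eval y).prod
        = c * ((derivative P * Q - P * derivative Q).roots.map
            fun y => (P - C z * Q).eval y).prod := by
  set W := derivative P * Q - P * derivative Q
  set n := P.natDegree
  have hP : P.leadingCoeff ≠ 0 := leadingCoeff_ne_zero.mpr (ne_zero_of_natDegree_gt hdeg)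
  have hQ : Q.leadingCoeff ≠ 0 := leadingCoeff_ne_zero.mpr (by
    rintro rfl
    have := natDegree_eq_zero_of_isUnit (isCoprime_zero_right.mp hcop)
    omega)
  have hWlc : W.leadingCoeff ≠ 0 := leadingCoeff_ne_zero.mpr hW
  have hdeg' (z : K) : (C z * Q).natDegree < n := (natDegree_C_mul_le z Q).trans_lt hdeg
  have hexchange (g : K[X]) (z : K) := leadingCoeff_pow_mul_prod_roots_eval
    (IsAlgClosed.splits (P - C z * Q)) (IsAlgClosed.splits g)
  simp only [natDegree_sub_eq_left_of_natDegree_lt (hdeg' _),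
    leadingCoeff_sub_of_degree_lt (degree_lt_degree (hdeg' _))] at hexchange
  set κ := (Q.roots.map P.eval).prod
  have hκ : κ ≠ 0 := Multiset.prod_ne_zero fun h0 => by
    obtain ⟨y, hy, h⟩ := Multiset.mem_map.mp h0
    exact hcop.not_isRoot_of_isRoot (isRoot_of_mem_roots hy) h
  have hQprod (z : K) : ((P - C z * Q).roots.map Q.eval).prod
      = (-1) ^ (n * Q.natDegree) * (Q.leadingCoeff ^ n * κ) / P.leadingCoeff ^ Q.natDegree := by
    rw [eq_div_iff (pow_ne_zero _ hP), mul_comm, hexchange]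
    congr 3
    exact Multiset.map_congr rfl fun y hy => by simp [(isRoot_of_mem_roots hy).eq_zero]
  have hWprod (z : K) : ((P - C z * Q).roots.map W.eval).prod
      = (-1) ^ (n * W.natDegree) * (W.leadingCoeff ^ n
        * (W.roots.map fun y => (P - C z * Q).eval y).prod) / P.leadingCoeff ^ W.natDegree := by
    rw [eq_div_iff (pow_ne_zero _ hP), mul_comm, hexchange]
  have hroot (z : K) :
      ((P - C z * Q).roots.map fun y => (derivative P - C z * derivative Q).eval y).prod
        * ((P - C z * Q).roots.map Q.eval).prod = ((P - C z * Q).roots.map W.eval).prod := by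
    rw [← Multiset.prod_map_mul]
    refine congrArg _ (Multiset.map_congr rfl fun y hy => ?_)
    have := (isRoot_of_mem_roots hy).eq_zero
    simp only [W, eval_sub, eval_mul, eval_C] at this ⊢
    linear_combination (derivative Q).eval y * this
  refine ⟨P.leadingCoeff ^ Q.natDegree * ((-1) ^ (n * W.natDegree) * W.leadingCoeff ^ n)
      / (P.leadingCoeff ^ W.natDegree * ((-1) ^ (n * Q.natDegree) * (Q.leadingCoeff ^ n * κ))),
    by simp [hP, hWlc, hQ, hκ], fun z => ?_⟩
  have hroot := hroot z
  rw [hQprod, hWprod] at hroot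
  rw [← eq_div_iff (by simp [hP, hQ, hκ])] at hroot
  rw [hroot]
  field_simp

end Field

end Polynomial

theorem derivative_quotient_discriminant_general
    {k : Type*} [Field k] [IsAlgClosed k] (p : ℕ) [CharP k p]
    (P Q : Polynomial k) (hcop : IsCoprime P Q) (hQ : Q ≠ 0)
    (hdeg : Q.natDegree < P.natDegree) (hp : P.natDegree < p) :
    ∃ (A B : Polynomial k)
      (x : Fin (P.natDegree + Q.roots.toFinset.card - 1) → k) (c : k),
      c ≠ 0 ∧ B ≠ 0 ∧ IsCoprime A Q ∧
      A = ∏ i, (Polynomial.X - C (x i)) ∧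
      algebraMap (Polynomial k) (RatFunc k) (derivative P * Q - P * derivative Q) /
          algebraMap (Polynomial k) (RatFunc k) (Q ^ 2)
        = algebraMap (Polynomial k) (RatFunc k) A /
            algebraMap (Polynomial k) (RatFunc k) (B * Q) ∧
      (∀ z : k,
        ((P - C z * Q).roots.map
            (fun y => (derivative P - C z * derivative Q).eval y)).prod
          = c * ∏ i, (z - P.eval (x i) / Q.eval (x i))) ∧
      (C c * ∏ i, (Polynomial.X - C (P.eval (x i) / Q.eval (x i)))).natDegree
        = P.natDegree + Q.roots.toFinset.card - 1 := by
  set W := derivative P * Q - P * derivative Q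
  have hlead := natCast_sub_mul_leadingCoeff_mul_ne_zero (p := p) hQ hdeg hp
  have hW0 : W ≠ 0 := derivative_mul_sub_mul_derivative_ne_zero hlead
  obtain ⟨S, hWS, hSQ⟩ := exists_roots_derivative_mul_sub_mul_derivative_eq hcop hQ (hdeg.trans hp)
  have hScard : Multiset.card S = P.natDegree + Q.roots.toFinset.card - 1 := by
    have := card_add_natDegree_eq_of_roots_eq (IsAlgClosed.splits W) (IsAlgClosed.splits Q) hWS
    rw [natDegree_derivative_mul_sub_mul_derivative hlead] at this
    omega
  obtain ⟨x, rfl⟩ := Multiset.exists_univ_map_eq S hScard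
  obtain ⟨B, hB0, hWB⟩ := exists_mul_eq_prod_X_sub_C_mul (IsAlgClosed.splits W)
    (IsAlgClosed.splits Q) hW0 hQ hWS
  obtain ⟨c₁, hc₁, hdisc⟩ := exists_prod_roots_eval_derivative_sub_C_mul_eq hcop hdeg hW0
  obtain ⟨c₂, hc₂, hres⟩ := exists_prod_map_eval_add_eq (T := Q.roots - Q.roots.dedup) hcop hSQ
    fun y hy => isRoot_of_mem_roots (Multiset.mem_of_le tsub_le_self hy)
  simp only [Multiset.map_map, Function.comp_def, Finset.prod_map_val] at hWB hres
  refine ⟨_, B, x, c₁ * c₂, mul_ne_zero hc₁ hc₂, hB0, ?_, rfl, ?_, fun z => ?_, ?_⟩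
  · exact IsCoprime.prod_left fun i _ => (irreducible_X_sub_C _).coprime_iff_not_dvd.mpr <|
      by rw [dvd_iff_isRoot]; exact hSQ _ (Multiset.mem_map_of_mem _ (Finset.mem_univ i))
  · rw [div_eq_div_iff (RatFunc.algebraMap_ne_zero (pow_ne_zero 2 hQ))
      (RatFunc.algebraMap_ne_zero (mul_ne_zero hB0 hQ)), ← map_mul, ← map_mul]
    congr 1
    linear_combination Q * hWB
  · rw [hdisc, hWS, hres, mul_assoc]
  · rw [natDegree_C_mul (mul_ne_zero hc₁ hc₂), natDegree_prod _ _ fun i _ => X_sub_C_ne_zero _]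
    simp

/-- Let `P, Q ∈ k[X]` be coprime with `0 ≤ deg Q < deg P < p` over an algebraically
closed field of characteristic `p`.  Then `(P/Q)' = A/(BQ)` with `A` coprime to `Q`,
`A = ∏_{i=1}^d (X - xᵢ)` where `d = deg P + rdeg Q - 1` (`rdeg Q` = number of distinct
roots of `Q`), and the discriminant `D(Z)` in degree `deg P` of `P - Z·Q` (computed,
up to a fixed nonzero constant, as `∏_{y : (P-zQ)(y)=0} (P'-zQ')(y)`) satisfies
`D(Z) = c·∏ᵢ (Z - P(xᵢ)/Q(xᵢ))` for some `c ≠ 0`; in particular `deg D = d`. -/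
theorem derivative_quotient_discriminant
    {k : Type*} [Field k] [IsAlgClosed k] (p : ℕ) [Fact p.Prime] [CharP k p]
    (P Q : Polynomial k) (hcop : IsCoprime P Q) (hQ : Q ≠ 0)
    (hdeg : Q.natDegree < P.natDegree) (hp : P.natDegree < p) :
    ∃ (A B : Polynomial k)
      (x : Fin (P.natDegree + Q.roots.toFinset.card - 1) → k) (c : k),
      c ≠ 0 ∧ B ≠ 0 ∧ IsCoprime A Q ∧
      A = ∏ i, (Polynomial.X - C (x i)) ∧
      algebraMap (Polynomial k) (RatFunc k) (derivative P * Q - P * derivative Q) /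
          algebraMap (Polynomial k) (RatFunc k) (Q ^ 2)
        = algebraMap (Polynomial k) (RatFunc k) A /
            algebraMap (Polynomial k) (RatFunc k) (B * Q) ∧
      (∀ z : k,
        ((P - C z * Q).roots.map
            (fun y => (derivative P - C z * derivative Q).eval y)).prod
          = c * ∏ i, (z - P.eval (x i) / Q.eval (x i))) ∧
      (C c * ∏ i, (Polynomial.X - C (P.eval (x i) / Q.eval (x i)))).natDegree
        = P.natDegree + Q.roots.toFinset.card - 1 :=
  derivative_quotient_discriminant_general p P Q hcop hQ hdeg hp
end

section
/- Let k be a field of characteristic p and let Q_1,...,Q_n ∈ k[X] with Moore determinant Δ_n(Q) ≠ 0. Then the first derivative of the Dickson invariant c_{n,n-1}(Q) = det(Q,Q^p,...,Q^{p^{n-2}},Q^{p^n})/Δ_n(Q) is c_{n,n-1}(Q)' = -det(Q', Q, Q^p, ..., Q^{p^{n-2}}) · Δ_n(Q)^{p-2}. -/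
/-!
Since `(f ^ p ^ e)' = 0` for `e ≥ 1`, only the entry `Q` of each Moore-type determinant is
differentiated: `N'` and `Δ'` are `N` and `Δ` with `Q` replaced by `Q'`. All the determinants
involved share the rows `Q^p, …, Q^{p^{n-2}}`, and the three-term Plücker relation among them reads
`N'Δ = NΔ' + det(Q, …, Q^{p^{n-2}}, Q') · det(Q^{p^{n-1}}, Q^p, …, Q^{p^{n-2}}, Q^{p^n})`.
Up to reordering rows the last product is `-D · Δ^p`, as `Δ^p = det(Q^p, …, Q^{p^n})` by Frobenius.
-/

open Polynomial

open Matrix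

theorem derivative_pow_char_pow {R : Type*} [CommSemiring R] (p : ℕ) [CharP R p] (f : R[X])
    {e : ℕ} (he : e ≠ 0) : derivative (f ^ p ^ e) = 0 := by
  simp [derivative_pow, CharP.cast_eq_zero, he]

namespace Matrix

variable {n R : Type*} [Fintype n] [DecidableEq n] [CommRing R]

/-- A three-term Plücker relation: expand `det M • x` in the rows of `M` by Cramer's rule; only
the rows `i` and `j` survive. -/
theorem det_mul_det_updateRow_updateRow (M : Matrix n n R) {i j : n} (hij : i ≠ j)
    (x y : n → R) :
    M.det * ((M.updateRow j y).updateRow i x).det =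
      (M.updateRow i x).det * (M.updateRow j y).det +
        (M.updateRow j x).det * ((M.updateRow j y).updateRow i (M j)).det := by
  set c : n → R := fun k => (M.updateRow k x).det
  have cramer_rule : M.det • x = ∑ k, c k • M k := by
    rw [← vecMul_eq_sum, ← mulVec_transpose, ← det_transpose, ← mulVec_cramer]
    congr 1
    funext k
    exact cramer_transpose_apply M x k
  set A := M.updateRow j y
  calc M.det * (A.updateRow i x).det = (A.updateRow i (M.det • x)).det := by
        rw [det_updateRow_smul]
    _ = ∑ k, c k * (A.updateRow i (M k)).det := by
        rw [cramer_rule]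
        exact (detRowAlternating.map_update_sum _ i _ A).trans
          (Finset.sum_congr rfl fun k _ => det_updateRow_smul A i (c k) (M k))
    _ = c i * (A.updateRow i (M i)).det + c j * (A.updateRow i (M j)).det :=
        Fintype.sum_eq_add i j hij fun k ⟨hki, hkj⟩ => by
          rw [← updateRow_ne (M := M) (b := y) hkj, det_updateRow_eq_zero hki, mul_zero]
    _ = _ := by
        rw [← updateRow_ne (M := M) (b := y) hij, updateRow_eq_self]

theorem derivative_det (A : Matrix n n R[X]) :
    derivative A.det = ∑ i, (A.updateRow i fun j => derivative (A i j)).det := by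
  simp_rw [← det_transpose A, ← det_transpose (A.updateRow _ _), det_apply', map_sum,
    derivative_intCast_mul, derivative_prod_finset, Finset.mul_sum]
  rw [Finset.sum_comm]
  refine Finset.sum_congr rfl fun i _ => Finset.sum_congr rfl fun σ _ => ?_
  rw [← Finset.mul_prod_erase _ _ (Finset.mem_univ i)]
  simp only [transpose_apply, updateRow_apply, if_pos]
  rw [Finset.prod_congr rfl fun k hk => if_neg (Finset.ne_of_mem_erase hk)]
  ring

theorem derivative_det_eq_det_updateRow (A : Matrix n n R[X]) (i₀ : n)
    (h : ∀ i ≠ i₀, ∀ j, derivative (A i j) = 0) :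
    derivative A.det = (A.updateRow i₀ fun j => derivative (A i₀ j)).det := by
  rw [derivative_det, Fintype.sum_eq_single i₀]
  exact fun i hi => det_eq_zero_of_row_eq_zero i fun j => by rw [updateRow_self, h i hi]

end Matrix

section Moore

variable {R : Type*} [CommRing R] (p : ℕ)

@[simp]
theorem mooreMatrix_apply {n : ℕ} (a : Fin n → R) (i j : Fin n) :
    mooreMatrix p a i j = a j ^ p ^ (i : ℕ) :=
  rfl

/-- The numerator of the Dickson invariant `c_{n,n-1}(a) = dicksonNumerator p a / Δ_n(a)`. -/
def dicksonNumerator {n : ℕ} (a : Fin n → R) : R :=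
  (Matrix.of fun i j : Fin n => if (j : ℕ) = n - 1 then a i ^ p ^ n else a i ^ p ^ (j : ℕ)).det

/-- `D = det(Q', Q, Q^p, …, Q^{p^{n-2}})`. -/
noncomputable def consDerivMooreDet {n : ℕ} (Q : Fin n → R[X]) : R[X] :=
  (Matrix.of fun i j : Fin n =>
    if (j : ℕ) = 0 then derivative (Q i) else Q i ^ p ^ ((j : ℕ) - 1)).det

theorem det_mooreMatrix_pow [ExpChar R p] {n : ℕ} (a : Fin n → R) :
    (mooreMatrix p a).det ^ p = (mooreMatrix p fun j => a j ^ p).det := by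
  rw [← frobenius_def, RingHom.map_det]
  congr 1
  ext i j
  simp [frobenius_def, ← pow_mul, mul_comm]

theorem det_mooreMatrix_pow_eq_det_updateRow {m : ℕ} (a : Fin (m + 2) → R) :
    (mooreMatrix p fun j => a j ^ p).det =
      (-1) ^ m * (((mooreMatrix p a).updateRow (Fin.last _) fun j => a j ^ p ^ (m + 2)).updateRow
        0 (mooreMatrix p a (Fin.last _))).det := by
  set B := ((mooreMatrix p a).updateRow (Fin.last _) fun j => a j ^ p ^ (m + 2)).updateRow
    0 (mooreMatrix p a (Fin.last _))
  set τ := Fin.cycleRange (Fin.castSucc (Fin.last m))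
  have hrow : ∀ k j, B (τ k) j = a j ^ p ^ ((k : ℕ) + 1) := by
    intro k j
    induction k using Fin.lastCases with
    | last =>
      rw [Fin.cycleRange_of_gt (Fin.castSucc_lt_last _)]
      simp [B, updateRow_apply]
    | cast k =>
      induction k using Fin.lastCases with
      | last => simp [B, τ]
      | cast l =>
        have : τ l.castSucc.castSucc = l.succ.castSucc := by
          ext
          rw [Fin.coe_cycleRange_of_le (by simp [Fin.le_def])]
          simp [Fin.ext_iff, l.isLt.ne]
        simp [B, this, updateRow_apply, Fin.ext_iff, l.isLt.ne]
  calc (mooreMatrix p fun j => a j ^ p).det = (B.submatrix τ id).det := by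
        congr 1
        ext k j
        simp [hrow k, ← pow_mul, pow_succ']
    _ = _ := by
        rw [det_permute, Fin.sign_cycleRange]
        simp

theorem dicksonNumerator_eq_det_updateRow {n : ℕ} (a : Fin (n + 1) → R) :
    dicksonNumerator p a =
      ((mooreMatrix p a).updateRow (Fin.last n) fun j => a j ^ p ^ (n + 1)).det := by
  rw [dicksonNumerator, ← det_transpose]
  congr 1
  ext i j
  simp [updateRow_apply, Fin.ext_iff]

theorem consDerivMooreDet_eq_det_updateRow {n : ℕ} (Q : Fin (n + 1) → R[X]) :
    consDerivMooreDet p Q =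
      (-1) ^ n * ((mooreMatrix p Q).updateRow (Fin.last n) fun j => derivative (Q j)).det := by
  calc consDerivMooreDet p Q = (((mooreMatrix p Q).updateRow (Fin.last n)
        fun j => derivative (Q j)).submatrix (Fin.cycleRange (Fin.last n)).symm id).det := by
        rw [consDerivMooreDet, ← det_transpose]
        congr 1
        ext i j : 1
        induction i using Fin.cases with
        | zero => rw [submatrix_apply, Fin.cycleRange_symm_zero]; simp
        | succ i =>
          rw [submatrix_apply, Fin.cycleRange_symm_succ, Fin.succAbove_last]
          simp
    _ = _ := by
        rw [det_permute, Equiv.Perm.sign_symm, Fin.sign_cycleRange]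
        simp

section Derivative

variable [CharP R p]

theorem derivative_det_mooreMatrix {n : ℕ} (Q : Fin (n + 1) → R[X]) :
    derivative (mooreMatrix p Q).det =
      ((mooreMatrix p Q).updateRow 0 fun j => derivative (Q j)).det := by
  rw [derivative_det_eq_det_updateRow (mooreMatrix p Q) 0 fun i hi j =>
    derivative_pow_char_pow p _ (Fin.val_ne_zero_iff.mpr hi)]
  simp

theorem derivative_dicksonNumerator {m : ℕ} (Q : Fin (m + 2) → R[X]) :
    derivative (dicksonNumerator p Q) =
      (((mooreMatrix p Q).updateRow (Fin.last _) fun j => Q j ^ p ^ (m + 2)).updateRow 0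
        fun j => derivative (Q j)).det := by
  rw [dicksonNumerator_eq_det_updateRow, derivative_det_eq_det_updateRow _ 0]
  · simp
  · intro i hi j
    rw [updateRow_apply]
    split_ifs
    · exact derivative_pow_char_pow p _ (by omega)
    · exact derivative_pow_char_pow p _ (Fin.val_ne_zero_iff.mpr hi)

variable [Fact p.Prime]

theorem derivative_dicksonNumerator_mul_sub {n : ℕ} (hn : n ≠ 0) (Q : Fin n → R[X]) :
    derivative (dicksonNumerator p Q) * (mooreMatrix p Q).det -
        dicksonNumerator p Q * derivative (mooreMatrix p Q).det =
      -(consDerivMooreDet p Q * (mooreMatrix p Q).det ^ p) := by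
  obtain _ | _ | m := n
  · exact absurd rfl hn
  · have h := derivative_pow_char_pow p (Q 0) one_ne_zero
    rw [pow_one] at h
    simp [dicksonNumerator, consDerivMooreDet, h, mul_comm]
  · have plucker := (mooreMatrix p Q).det_mul_det_updateRow_updateRow Fin.last_pos.ne
      (fun j => derivative (Q j)) (fun j => Q j ^ p ^ (m + 2))
    have sign (a b : R[X]) : (-1) ^ (m + 1) * a * ((-1) ^ m * b) = -(a * b) := by
      rw [mul_mul_mul_comm, ← pow_add, Odd.neg_one_pow ⟨m, by ring⟩, neg_one_mul]
    rw [derivative_dicksonNumerator, derivative_det_mooreMatrix, dicksonNumerator_eq_det_updateRow,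
      consDerivMooreDet_eq_det_updateRow, det_mooreMatrix_pow, det_mooreMatrix_pow_eq_det_updateRow,
      sign]
    linear_combination plucker

end Derivative

end Moore

/-- Derivative of the Dickson invariant `c_{n,n-1}(Q) = N/Δ_n(Q)` where
`N = det(Q,Q^p,…,Q^{p^{n-2}},Q^{p^n})`: writing the derivative of the quotient by the
quotient rule `(N'Δ - NΔ')/Δ²`, one has, in `k(X)`,
`c_{n,n-1}(Q)' = -det(Q',Q,Q^p,…,Q^{p^{n-2}})·Δ_n(Q)^{p-2}`. -/
theorem dickson_invariant_derivative
    {k : Type*} [Field k] (p : ℕ) [Fact p.Prime] [CharP k p]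
    (n : ℕ) (hn : 1 ≤ n) (Q : Fin n → Polynomial k)
    (hQ : (mooreMatrix p Q).det ≠ 0)
    (N : Polynomial k)
    (hN : N = (Matrix.of fun i j : Fin n =>
        if (j : ℕ) = n - 1 then Q i ^ p ^ n else Q i ^ p ^ (j : ℕ)).det) :
    algebraMap (Polynomial k) (RatFunc k)
        (derivative N * (mooreMatrix p Q).det - N * derivative (mooreMatrix p Q).det) /
        algebraMap (Polynomial k) (RatFunc k) ((mooreMatrix p Q).det ^ 2)
      = - algebraMap (Polynomial k) (RatFunc k)
          ((Matrix.of fun i j : Fin n =>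
              if (j : ℕ) = 0 then derivative (Q i) else Q i ^ p ^ ((j : ℕ) - 1)).det
            * (mooreMatrix p Q).det ^ (p - 2)) := by
  have key : derivative N * (mooreMatrix p Q).det - N * derivative (mooreMatrix p Q).det =
      -(consDerivMooreDet p Q * (mooreMatrix p Q).det ^ (p - 2)) * (mooreMatrix p Q).det ^ 2 := by
    rw [hN, neg_mul, mul_assoc, ← pow_add, Nat.sub_add_cancel (Fact.out : p.Prime).two_le]
    exact derivative_dicksonNumerator_mul_sub p (by omega) Q
  have hΔ : algebraMap k[X] (RatFunc k) ((mooreMatrix p Q).det ^ 2) ≠ 0 :=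
    (map_ne_zero_iff _ (RatFunc.algebraMap_injective k)).mpr (pow_ne_zero 2 hQ)
  rw [key, map_mul, mul_div_cancel_right₀ _ hΔ, map_neg]
  rfl
end

section
/- Let k be an algebraically closed field of characteristic 2, and let U_1,...,U_n, V_1,...,V_n ∈ k[X] and α, β ∈ k(X) satisfy: (i) U_i = α V_i + β V_i^2 for all i, and (ii) β^{2^{n-1}-1} · Δ_n(V_1,...,V_n) = 1. Then det(U, V, U^2, U^4, ..., U^{2^{n-2}}) = 1, where U = (U_1,...,U_n), V = (V_1,...,V_n) and powers are componentwise. -/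
/-!
Frobenius is additive in characteristic `p`, so `u = a v + b v ^ p` gives
`u ^ p ^ m = a ^ p ^ m v ^ p ^ m + b ^ p ^ m v ^ p ^ (m + 1)`. Hence the matrix with columns
`v, u, u ^ p, …, u ^ p ^ (n - 2)` is the transposed Moore matrix of `v` times an upper bidiagonal
matrix with diagonal `1, b, b ^ p, …, b ^ p ^ (n - 2)`, so its determinant is
`b ^ (1 + p + ⋯ + p ^ (n - 2)) Δₙ(v)`. For `p = 2` the exponent is `2 ^ (n - 1) - 1`, and
swapping the first two columns only costs the sign `-1 = 1`. Working in `k(X)` and pulling back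
along the injection `k[X] → k(X)` gives the theorem.
-/

open Polynomial

open Finset Matrix

section

variable {R : Type*} [CommRing R] {n : ℕ}

theorem mooreMatrix_map {S : Type*} [CommRing S] (f : R →+* S) (p : ℕ) (v : Fin n → R) :
    mooreMatrix p (fun i => f (v i)) = (mooreMatrix p v).map f := by
  ext i j
  simp [mooreMatrix]

def frobeniusColumnMatrix (p : ℕ) (v u : Fin n → R) : Matrix (Fin n) (Fin n) R :=
  Matrix.of fun i j => if (j : ℕ) = 0 then v i else u i ^ p ^ ((j : ℕ) - 1)

/-- Column `j ≥ 1` holds the coefficients of `(a v + b v ^ p) ^ p ^ (j - 1)` in the basis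
`v ^ p ^ i` of the rows of the Moore matrix. -/
def frobeniusBidiagonal (p : ℕ) (a b : R) : Matrix (Fin n) (Fin n) R :=
  Matrix.of fun i j =>
    if i = j then (if (j : ℕ) = 0 then 1 else b ^ p ^ ((j : ℕ) - 1))
    else if (i : ℕ) + 1 = j then a ^ p ^ (i : ℕ) else 0

theorem frobeniusBidiagonal_isUpperTriangular (p : ℕ) (a b : R) :
    (frobeniusBidiagonal (n := n) p a b).IsUpperTriangular := by
  intro i j (hji : j < i)
  simp only [frobeniusBidiagonal, of_apply]
  rw [if_neg (ne_of_gt hji), if_neg (by omega)]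

theorem det_frobeniusBidiagonal (p : ℕ) (a b : R) :
    (frobeniusBidiagonal (n := n) p a b).det = b ^ ∑ i ∈ range (n - 1), p ^ i := by
  rw [det_of_isUpperTriangular (frobeniusBidiagonal_isUpperTriangular p a b)]
  simp only [frobeniusBidiagonal, of_apply, if_true]
  rw [Fin.prod_univ_eq_prod_range (fun j => if j = 0 then 1 else b ^ p ^ (j - 1))]
  cases n with
  | zero => simp
  | succ m => simp [prod_range_succ', prod_pow_eq_pow_sum]

theorem mooreMatrix_transpose_mul_frobeniusBidiagonal (p : ℕ) [ExpChar R p]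
    (v : Fin n → R) (a b : R) :
    (mooreMatrix p v)ᵀ * frobeniusBidiagonal p a b =
      frobeniusColumnMatrix p v (fun i => a * v i + b * v i ^ p) := by
  ext r j
  simp only [mul_apply, transpose_apply, mooreMatrix, frobeniusBidiagonal,
    frobeniusColumnMatrix, of_apply]
  rcases j with ⟨_ | j, hj⟩
  · rw [Fintype.sum_eq_single ⟨0, hj⟩ fun i hi => by simp [hi]]
    simp
  · rw [Fintype.sum_eq_add ⟨j, by omega⟩ ⟨j + 1, hj⟩ (by simp) fun i ⟨hi, hi'⟩ => by
      simp [hi', Fin.ext_iff] at hi ⊢; omega]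
    simp [add_pow_expChar_pow, mul_pow, ← pow_mul, pow_succ]
    ring

theorem det_frobeniusColumnMatrix (p : ℕ) [ExpChar R p] {u v : Fin n → R} {a b : R}
    (hu : ∀ i, u i = a * v i + b * v i ^ p) :
    (frobeniusColumnMatrix p v u).det =
      b ^ (∑ i ∈ range (n - 1), p ^ i) * (mooreMatrix p v).det := by
  rw [funext hu, ← mooreMatrix_transpose_mul_frobeniusBidiagonal, det_mul, det_transpose,
    det_frobeniusBidiagonal, mul_comm]

theorem det_swap_frobeniusColumnMatrix_of_charTwo [CharP R 2] (hn : 2 ≤ n) {u v : Fin n → R}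
    {a b : R} (hu : ∀ i, u i = a * v i + b * v i ^ 2) :
    (Matrix.of fun i (j : Fin n) =>
        if (j : ℕ) = 0 then u i
        else if (j : ℕ) = 1 then v i
        else u i ^ 2 ^ ((j : ℕ) - 1)).det = b ^ (2 ^ (n - 1) - 1) * (mooreMatrix 2 v).det := by
  set σ := Equiv.swap (⟨0, by omega⟩ : Fin n) ⟨1, by omega⟩
  have hswap : (Matrix.of fun i (j : Fin n) =>
        if (j : ℕ) = 0 then u i
        else if (j : ℕ) = 1 then v i
        else u i ^ 2 ^ ((j : ℕ) - 1)) = (frobeniusColumnMatrix 2 v u).submatrix id σ := by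
    ext i j
    simp only [frobeniusColumnMatrix, of_apply, submatrix_apply, id_eq, σ]
    rcases j with ⟨_ | _ | j, hj⟩ <;> simp [Equiv.swap_apply_of_ne_of_ne, Fin.ext_iff]
  rw [hswap, det_permute', Equiv.Perm.sign_swap (by simp [Fin.ext_iff]),
    det_frobeniusColumnMatrix 2 hu, Nat.geomSum_eq le_rfl]
  simp [CharTwo.neg_eq]

end

theorem char_two_det_condition_general
    {k : Type*} [Field k] [CharP k 2] (n : ℕ) (hn : 3 ≤ n)
    (U V : Fin n → Polynomial k) (α β : RatFunc k)
    (h1 : ∀ i, algebraMap (Polynomial k) (RatFunc k) (U i)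
        = α * algebraMap (Polynomial k) (RatFunc k) (V i)
          + β * algebraMap (Polynomial k) (RatFunc k) (V i) ^ 2)
    (h2 : β ^ (2 ^ (n - 1) - 1)
        * algebraMap (Polynomial k) (RatFunc k) (mooreMatrix 2 V).det = 1) :
    (Matrix.of fun i j : Fin n =>
        if (j : ℕ) = 0 then U i
        else if (j : ℕ) = 1 then V i
        else U i ^ 2 ^ ((j : ℕ) - 1)).det = 1 := by
  have : CharP (RatFunc k) 2 :=
    charP_of_injective_algebraMap (RatFunc.algebraMap_injective k) 2
  apply RatFunc.algebraMap_injective k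
  rw [RingHom.map_det, map_one, RingHom.mapMatrix_apply, ← h2, RingHom.map_det,
    RingHom.mapMatrix_apply, ← mooreMatrix_map,
    ← det_swap_frobeniusColumnMatrix_of_charTwo (by omega) h1]
  congr 1
  ext i j
  simp only [map_apply, of_apply]
  split_ifs <;> simp only [map_pow]

/-- In characteristic 2: if `Uᵢ = αVᵢ + βVᵢ²` for all `i` and
`β^{2^{n-1}-1}·Δ_n(V) = 1`, then `det(U, V, U², U⁴, …, U^{2^{n-2}}) = 1`. -/
theorem char_two_det_condition
    {k : Type*} [Field k] [IsAlgClosed k] [CharP k 2] (n : ℕ) (hn : 3 ≤ n)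
    (U V : Fin n → Polynomial k) (α β : RatFunc k)
    (h1 : ∀ i, algebraMap (Polynomial k) (RatFunc k) (U i)
        = α * algebraMap (Polynomial k) (RatFunc k) (V i)
          + β * algebraMap (Polynomial k) (RatFunc k) (V i) ^ 2)
    (h2 : β ^ (2 ^ (n - 1) - 1)
        * algebraMap (Polynomial k) (RatFunc k) (mooreMatrix 2 V).det = 1) :
    (Matrix.of fun i j : Fin n =>
        if (j : ℕ) = 0 then U i
        else if (j : ℕ) = 1 then V i
        else U i ^ 2 ^ ((j : ℕ) - 1)).det = 1 :=
  char_two_det_condition_general n hn U V α β h1 h2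
end

section
/- Let k be an algebraically closed field of characteristic 2 and λ ≥ 1 odd. Let V_1, V_2 ∈ k[X] be coprime polynomials of degree (λ-1)/2 such that V_1 + V_2 also has degree (λ-1)/2, and let (U_1, U_2) be the unique pair with deg U_i < (λ-1)/2 satisfying V_1 U_2 + U_1 V_2 = 1. Then setting Q_1 = U_1^2 + X V_1^2 and Q_2 = U_2^2 + X V_2^2, we have det of the 2×2 matrix with rows (Q_1', Q_1) and (Q_2', Q_2) equal to 1. -/
open Polynomial

/-- Characteristic 2, `λ` odd: if `V₁, V₂` are coprime of degree `(λ-1)/2` with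
`V₁ + V₂` also of degree `(λ-1)/2`, and `(U₁,U₂)` is the (unique) pair with
`deg Uᵢ < (λ-1)/2` and `V₁U₂ + U₁V₂ = 1`, then setting `Qᵢ = Uᵢ² + X·Vᵢ²` one has
`det ((Q₁', Q₁), (Q₂', Q₂)) = 1`. -/
theorem char_two_L_two_lambda_pair
    {k : Type*} [Field k] [IsAlgClosed k] [CharP k 2]
    (l : ℕ) (hl : Odd l)
    (V1 V2 U1 U2 : Polynomial k)
    (hV1 : V1.degree = ((l - 1) / 2 : ℕ))
    (hV2 : V2.degree = ((l - 1) / 2 : ℕ))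
    (hVcop : IsCoprime V1 V2)
    (hVsum : (V1 + V2).degree = ((l - 1) / 2 : ℕ))
    (hU1 : U1.degree < (((l - 1) / 2 : ℕ) : WithBot ℕ))
    (hU2 : U2.degree < (((l - 1) / 2 : ℕ) : WithBot ℕ))
    (hbez : V1 * U2 + U1 * V2 = 1) :
    Matrix.det
      !![derivative (U1 ^ 2 + Polynomial.X * V1 ^ 2), U1 ^ 2 + Polynomial.X * V1 ^ 2;
         derivative (U2 ^ 2 + Polynomial.X * V2 ^ 2), U2 ^ 2 + Polynomial.X * V2 ^ 2]
      = 1 := by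
  have h2k : (2 : k) = 0 := CharP.cast_eq_zero k 2
  have h2 : (2 : Polynomial k) = 0 := by
    have := CharP.cast_eq_zero (Polynomial k) 2
    simpa using this
  have hd : ∀ U V : Polynomial k,
      derivative (U ^ 2 + Polynomial.X * V ^ 2) = V ^ 2 := by
    intro U V
    simp only [derivative_add, derivative_pow, derivative_mul, derivative_X]
    ring_nf
    simp [h2k]
  rw [hd, hd, Matrix.det_fin_two_of]
  linear_combination (V1*U2 + U1*V2 + 1) * hbez + (-(V1*U2*U1*V2) - U1^2*V2^2) * h2
end
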